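/- arXiv:1103.6203 — 4 statements merged into one kernel-verified Lean document; each statement's English description precedes it below -/
import Mathlib

section
/- The k-th large Schröder number satisfies r_k = (1/k)·∑_{j=0}^{k} C(k,j)·C(k,j-1)·2^j for every positive integer k, where C(k,-1) = 0. -/
open Finset

/-- A large Schröder path to `(k,k)`: a list of steps each equal to `(1,0)`, `(0,1)` or
`(1,1)`, whose total displacement is `(k,k)`, and such that no partial sum rises above
the diagonal (the `y`-coordinate never exceeds the `x`-coordinate). -/
def IsSchroederPath (k : ℕ) (l : List (ℕ × ℕ)) : Prop :=
  (∀ s ∈ l, s = ((1 : ℕ), (0 : ℕ)) ∨ s = (0, 1) ∨ s = (1, 1)) ∧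
  (l.map Prod.fst).sum = k ∧ (l.map Prod.snd).sum = k ∧
  ∀ i : ℕ, ((l.take i).map Prod.snd).sum ≤ ((l.take i).map Prod.fst).sum

/-!
Splitting a path of size `n + 1` after its first step (a diagonal step, or an east step
together with the first north step that returns to the diagonal) gives
`r (n + 1) = r n + ∑ i ≤ n, r i * r (n - i)`, so the generating function satisfies
`F = 1 + x F + x F²`. Differentiating and eliminating `F²` yields the linear differential equation
`x (1 - 6 x + x²) F' = (3 x - 1) F + x + 1`, i.e. the three-term recurrence
`(n + 4) r (n + 3) = 3 (2 n + 5) r (n + 2) - (n + 1) r (n + 1)`. Creative telescoping shows that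
the closed form satisfies the same recurrence, and both sides agree at `k = 1, 2`.
-/

theorem Nat.cast_choose_succ_right_eq {R : Type*} [CommRing R] (n k : ℕ) :
    (n.choose (k + 1) : R) * (k + 1) = n.choose k * (n - k) := by
  rcases le_or_gt k n with h | h
  · have := congrArg (Nat.cast : ℕ → R) (n.choose_succ_right_eq k)
    push_cast [Nat.cast_sub h] at this
    exact this
  · simp [Nat.choose_eq_zero_of_lt h, Nat.choose_eq_zero_of_lt (h.trans (lt_add_one k))]

theorem Nat.cast_choose_mul_succ_eq {R : Type*} [CommRing R] (n k : ℕ) :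
    (n.choose k : R) * (n + 1) = (n + 1).choose k * (n + 1 - k) := by
  rcases le_or_gt k (n + 1) with h | h
  · have := congrArg (Nat.cast : ℕ → R) (n.choose_mul_succ_eq k)
    push_cast [Nat.cast_sub h] at this
    exact this
  · simp [Nat.choose_eq_zero_of_lt h, Nat.choose_eq_zero_of_lt ((lt_add_one n).trans h)]

namespace Schroeder

def IsStep (s : ℕ × ℕ) : Prop := s = (1, 0) ∨ s = (0, 1) ∨ s = (1, 1)

def sumFst (l : List (ℕ × ℕ)) : ℕ := (l.map Prod.fst).sum

def sumSnd (l : List (ℕ × ℕ)) : ℕ := (l.map Prod.snd).sum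

@[simp] theorem sumFst_nil : sumFst [] = 0 := rfl
@[simp] theorem sumSnd_nil : sumSnd [] = 0 := rfl
@[simp] theorem sumFst_cons (s : ℕ × ℕ) (l) : sumFst (s :: l) = s.1 + sumFst l := rfl
@[simp] theorem sumSnd_cons (s : ℕ × ℕ) (l) : sumSnd (s :: l) = s.2 + sumSnd l := rfl

@[simp] theorem sumFst_append (l l') : sumFst (l ++ l') = sumFst l + sumFst l' := by
  simp [sumFst]

@[simp] theorem sumSnd_append (l l') : sumSnd (l ++ l') = sumSnd l + sumSnd l' := by
  simp [sumSnd]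

variable {k n : ℕ} {l t A B : List (ℕ × ℕ)}

theorem isSchroederPath_iff : IsSchroederPath k l ↔
    (∀ s ∈ l, IsStep s) ∧ sumFst l = k ∧ sumSnd l = k ∧
      ∀ i, sumSnd (l.take i) ≤ sumFst (l.take i) :=
  Iff.rfl

theorem length_le_sumFst_add_sumSnd (h : ∀ s ∈ l, IsStep s) :
    l.length ≤ sumFst l + sumSnd l := by
  induction l with
  | nil => simp
  | cons s l ih =>
    have := ih fun s hs => h s (List.mem_cons_of_mem _ hs)
    rcases h s List.mem_cons_self with rfl | rfl | rfl <;> simp <;> omega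

theorem finite_setOf_isSchroederPath (k : ℕ) : {l | IsSchroederPath k l}.Finite := by
  let embed (q : Fin 2 × Fin 2) : ℕ × ℕ := (q.1, q.2)
  refine ((List.finite_length_le (Fin 2 × Fin 2) (2 * k)).image (List.map embed)).subset ?_
  intro l hl
  obtain ⟨hsteps, hx, hy, -⟩ := isSchroederPath_iff.1 hl
  refine ⟨l.map fun s => (Fin.ofNat 2 s.1, Fin.ofNat 2 s.2), (?_ : _ ≤ 2 * k), ?_⟩
  · rw [List.length_map]
    linarith [length_le_sumFst_add_sumSnd hsteps]
  · rw [List.map_map, List.map_congr_left (g := id), List.map_id]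
    intro s hs
    rcases hsteps s hs with rfl | rfl | rfl <;> rfl

theorem isSchroederPath_zero_iff : IsSchroederPath 0 l ↔ l = [] := by
  refine ⟨fun h => ?_, ?_⟩
  · obtain ⟨hsteps, hx, hy, -⟩ := isSchroederPath_iff.1 h
    have := length_le_sumFst_add_sumSnd hsteps
    rw [← List.length_eq_zero_iff]
    omega
  · rintro rfl
    exact ⟨by simp, rfl, rfl, by simp⟩

theorem _root_.IsSchroederPath.diag_cons (h : IsSchroederPath n l) :
    IsSchroederPath (n + 1) ((1, 1) :: l) := by
  obtain ⟨hsteps, hx, hy, hpre⟩ := isSchroederPath_iff.1 h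
  refine isSchroederPath_iff.2 ⟨?_, by simp [hx, add_comm], by simp [hy, add_comm], ?_⟩
  · rintro s (_ | ⟨_, hs⟩)
    exacts [.inr (.inr rfl), hsteps s hs]
  · rintro (_ | i)
    · simp
    · simpa using hpre i

theorem _root_.IsSchroederPath.east_cons_append_north_cons {a b : ℕ}
    (hA : IsSchroederPath a A) (hB : IsSchroederPath b B) :
    IsSchroederPath (a + b + 1) ((1, 0) :: (A ++ (0, 1) :: B)) := by
  obtain ⟨hAsteps, hAx, hAy, hApre⟩ := isSchroederPath_iff.1 hA
  obtain ⟨hBsteps, hBx, hBy, hBpre⟩ := isSchroederPath_iff.1 hB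
  refine isSchroederPath_iff.2 ⟨?_, by simp only [sumFst_cons, sumFst_append]; omega,
    by simp only [sumSnd_cons, sumSnd_append]; omega, ?_⟩
  · simp only [List.mem_cons, List.mem_append]
    rintro s (rfl | hs | rfl | hs)
    exacts [.inl rfl, hAsteps s hs, .inr (.inl rfl), hBsteps s hs]
  · rintro (_ | i)
    · simp
    rw [List.take_succ_cons, List.take_append]
    rcases hi : i - A.length with _ | j
    · simpa [add_comm] using (hApre i).trans (Nat.le_succ _)
    · rw [List.take_of_length_le (by omega)]
      simp only [List.take_succ_cons, sumFst_cons, sumSnd_cons, sumFst_append, sumSnd_append]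
      linarith [hBpre j]

/-- `t` is the tail of a path after an initial east step; `A ++ [(0, 1)]` is its segment up to
the first return to the diagonal. -/
theorem exists_eq_append_north_cons (hsteps : ∀ s ∈ t, IsStep s)
    (hpre : ∀ i, sumSnd (t.take i) ≤ sumFst (t.take i) + 1) (hend : sumFst t < sumSnd t) :
    ∃ A B, t = A ++ (0, 1) :: B ∧ sumSnd A = sumFst A ∧
      ∀ i, sumSnd (A.take i) ≤ sumFst (A.take i) := by
  classical
  have hex : ∃ i, sumFst (t.take i) < sumSnd (t.take i) := ⟨t.length, by simpa using hend⟩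
  have hmin (i : ℕ) (hi : i < Nat.find hex) : sumSnd (t.take i) ≤ sumFst (t.take i) :=
    not_lt.1 (Nat.find_min hex hi)
  obtain ⟨m, hm⟩ : ∃ m, Nat.find hex = m + 1 :=
    Nat.exists_eq_add_one.2 (Nat.pos_of_ne_zero fun h => by simpa [h] using Nat.find_spec hex)
  have hfind := Nat.find_spec hex
  rw [hm] at hfind hmin
  have hlt : m < t.length := by
    by_contra! h
    have := hmin m (lt_add_one m)
    rw [List.take_of_length_le h] at this
    rw [List.take_of_length_le (by omega)] at hfind
    omega
  have hstep := hpre (m + 1)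
  rw [List.take_succ_eq_append_getElem hlt] at hfind hstep
  have hbefore := hmin m (lt_add_one m)
  have hnorth : t[m] = (0, 1) ∧ sumSnd (t.take m) = sumFst (t.take m) := by
    rcases hsteps _ (List.getElem_mem hlt) with h | h | h <;>
      simp only [h, sumFst_append, sumFst_cons, sumFst_nil, sumSnd_append, sumSnd_cons, sumSnd_nil,
        add_zero] at hfind hstep
    · omega
    · exact ⟨h, by omega⟩
    · omega
  refine ⟨t.take m, t.drop (m + 1), ?_, hnorth.2, fun i => ?_⟩
  · rw [← hnorth.1, ← List.drop_eq_getElem_cons hlt, List.take_append_drop]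
  · rw [List.take_take]
    exact hmin _ (by omega)

theorem _root_.IsSchroederPath.eq_diag_cons_or_eq_east_cons (h : IsSchroederPath (n + 1) l) :
    (∃ t, l = (1, 1) :: t ∧ IsSchroederPath n t) ∨
      ∃ a A B, a ≤ n ∧ l = (1, 0) :: (A ++ (0, 1) :: B) ∧
        IsSchroederPath a A ∧ IsSchroederPath (n - a) B := by
  obtain ⟨hsteps, hx, hy, hpre⟩ := isSchroederPath_iff.1 h
  rcases l with _ | ⟨s, t⟩
  · simp at hx
  have htsteps : ∀ s ∈ t, IsStep s := fun s hs => hsteps s (List.mem_cons_of_mem _ hs)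
  have htpre (i : ℕ) : s.2 + sumSnd (t.take i) ≤ s.1 + sumFst (t.take i) := by
    simpa using hpre (i + 1)
  rcases hsteps s List.mem_cons_self with rfl | rfl | rfl
  · simp only [sumFst_cons, sumSnd_cons, zero_add] at hx hy htpre
    obtain ⟨A, B, rfl, hAbal, hApre⟩ :=
      exists_eq_append_north_cons htsteps (fun i => by linarith [htpre i]) (by omega)
    simp only [sumFst_append, sumFst_cons, sumSnd_append, sumSnd_cons] at hx hy
    have hBpre (i : ℕ) : sumSnd (B.take i) ≤ sumFst (B.take i) := by
      have := htpre (A.length + (i + 1))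
      simp only [List.take_length_add_append, List.take_succ_cons, sumFst_append, sumFst_cons,
        sumSnd_append, sumSnd_cons] at this
      omega
    exact .inr ⟨sumFst A, A, B, by omega, rfl,
      isSchroederPath_iff.2 ⟨fun s hs => htsteps s (by simp [hs]), rfl, hAbal, hApre⟩,
      isSchroederPath_iff.2 ⟨fun s hs => htsteps s (by simp [hs]), by omega, by omega, hBpre⟩⟩
  · simpa using hpre 1
  · simp only [sumFst_cons, sumSnd_cons] at hx hy htpre
    exact .inl ⟨t, rfl,
      isSchroederPath_iff.2 ⟨htsteps, by omega, by omega, fun i => by simpa using htpre i⟩⟩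

theorem length_le_of_append_north_cons_eq {A' B B' : List (ℕ × ℕ)} (hA : sumSnd A = sumFst A)
    (hA' : ∀ i, sumSnd (A'.take i) ≤ sumFst (A'.take i))
    (h : A ++ (0, 1) :: B = A' ++ (0, 1) :: B') : A'.length ≤ A.length := by
  by_contra! hlt
  have hprefix := hA' (A.length + 1)
  rw [← List.take_append_of_le_length (i := A.length + 1) (l₂ := (0, 1) :: B') hlt, ← h,
    List.take_length_add_append] at hprefix
  simp only [List.take_succ_cons, List.take_zero, sumFst_append, sumFst_cons, sumFst_nil,
    sumSnd_append, sumSnd_cons, sumSnd_nil] at hprefix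
  omega

theorem eq_and_eq_of_append_north_cons_eq {a a' : ℕ} {A' B' : List (ℕ × ℕ)}
    (hA : IsSchroederPath a A) (hA' : IsSchroederPath a' A')
    (h : A ++ (0, 1) :: B = A' ++ (0, 1) :: B') : A = A' ∧ B = B' := by
  have hlen : A.length = A'.length :=
    le_antisymm (length_le_of_append_north_cons_eq (hA'.2.2.1.trans hA'.2.1.symm) hA.2.2.2 h.symm)
      (length_le_of_append_north_cons_eq (hA.2.2.1.trans hA.2.1.symm) hA'.2.2.2 h)
  obtain ⟨rfl, hB⟩ := List.append_inj h hlen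
  exact ⟨rfl, List.cons_injective hB⟩

def glue (n : ℕ) :
    {t // IsSchroederPath n t} ⊕
      (Σ i : Fin (n + 1), {A // IsSchroederPath i A} × {B // IsSchroederPath (n - i) B}) →
    {l // IsSchroederPath (n + 1) l}
  | .inl ⟨t, ht⟩ => ⟨(1, 1) :: t, ht.diag_cons⟩
  | .inr ⟨i, ⟨A, hA⟩, ⟨B, hB⟩⟩ => ⟨(1, 0) :: (A ++ (0, 1) :: B), by
      simpa [Nat.add_sub_cancel' (Nat.le_of_lt_succ i.2)] using
        hA.east_cons_append_north_cons hB⟩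

theorem glue_bijective (n : ℕ) : Function.Bijective (glue n) := by
  refine ⟨?_, fun ⟨l, hl⟩ => ?_⟩
  · rintro (⟨t, ht⟩ | ⟨i, ⟨A, hA⟩, ⟨B, hB⟩⟩) (⟨t', ht'⟩ | ⟨i', ⟨A', hA'⟩, ⟨B', hB'⟩⟩) h <;>
      simp only [glue, Subtype.mk.injEq, List.cons.injEq, Prod.mk.injEq] at h
    · simp [h.2]
    · simp at h
    · simp at h
    · obtain ⟨rfl, rfl⟩ := eq_and_eq_of_append_north_cons_eq hA hA' h.2
      obtain rfl : i = i' := Fin.ext (hA.2.1.symm.trans hA'.2.1)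
      rfl
  · rcases hl.eq_diag_cons_or_eq_east_cons with ⟨t, rfl, ht⟩ | ⟨a, A, B, ha, rfl, hA, hB⟩
    · exact ⟨.inl ⟨t, ht⟩, rfl⟩
    · exact ⟨.inr ⟨⟨a, by omega⟩, ⟨A, hA⟩, ⟨B, hB⟩⟩, rfl⟩

noncomputable def schroederNumber (k : ℕ) : ℕ := Nat.card {l // IsSchroederPath k l}

theorem schroederNumber_zero : schroederNumber 0 = 1 := by
  simp [schroederNumber, isSchroederPath_zero_iff]

theorem schroederNumber_succ (n : ℕ) : schroederNumber (n + 1) =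
    schroederNumber n + ∑ i ∈ range (n + 1), schroederNumber i * schroederNumber (n - i) := by
  have (j : ℕ) : Finite {l // IsSchroederPath j l} := (finite_setOf_isSchroederPath j).to_subtype
  rw [schroederNumber, ← Nat.card_eq_of_bijective _ (glue_bijective n), Nat.card_sum,
    Nat.card_sigma,
    ← Fin.sum_univ_eq_sum_range fun i => schroederNumber i * schroederNumber (n - i)]
  simp only [Nat.card_prod, schroederNumber]

theorem schroederNumber_one : schroederNumber 1 = 2 := by
  simp [schroederNumber_succ, schroederNumber_zero]

theorem schroederNumber_two : schroederNumber 2 = 6 := by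
  simp [schroederNumber_succ, schroederNumber_zero, sum_range_succ]

def SchroederRecurrence (u : ℕ → ℚ) : Prop :=
  ∀ n : ℕ, ((n : ℚ) + 4) * u (n + 3) = 3 * (2 * n + 5) * u (n + 2) - (n + 1) * u (n + 1)

theorem SchroederRecurrence.eq_succ_of_eq_one_of_eq_two {u v : ℕ → ℚ} (hu : SchroederRecurrence u)
    (hv : SchroederRecurrence v) (h1 : u 1 = v 1) (h2 : u 2 = v 2) (n : ℕ) :
    u (n + 1) = v (n + 1) := by
  suffices ∀ n, u (n + 1) = v (n + 1) ∧ u (n + 2) = v (n + 2) from (this n).1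
  intro n
  induction n with
  | zero => exact ⟨h1, h2⟩
  | succ n ih =>
    refine ⟨ih.2, mul_left_cancel₀ (by positivity : (n : ℚ) + 4 ≠ 0) ?_⟩
    rw [hu, hv, ih.1, ih.2]

section GeneratingFunction

open PowerSeries

noncomputable def schroederSeries : ℚ⟦X⟧ := mk fun k => (schroederNumber k : ℚ)

theorem schroederSeries_eq :
    schroederSeries = 1 + X * schroederSeries + X * schroederSeries ^ 2 := by
  ext (_ | k)
  · simp [schroederSeries, schroederNumber_zero]
  · rw [pow_two, map_add, map_add, coeff_succ_X_mul, coeff_succ_X_mul, coeff_mul,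
      Nat.sum_antidiagonal_eq_sum_range_succ
        fun i j => coeff i schroederSeries * coeff j schroederSeries]
    simp [schroederSeries, schroederNumber_succ]

theorem schroederSeries_differential_eq :
    X * (X * (X * d⁄dX ℚ schroederSeries)) - 6 • (X * (X * d⁄dX ℚ schroederSeries)) +
        X * d⁄dX ℚ schroederSeries =
      3 • (X * schroederSeries) - schroederSeries + X + 1 := by
  set F := schroederSeries
  have hF' : d⁄dX ℚ F = F + X * d⁄dX ℚ F + F ^ 2 + 2 * X * F * d⁄dX ℚ F := by
    have := congrArg (d⁄dX ℚ) schroederSeries_eq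
    simp only [map_add, Derivation.leibniz, Derivation.leibniz_pow, derivative_X,
      Derivation.map_one_eq_zero, smul_eq_mul] at this
    linear_combination this
  linear_combination (X - X ^ 2 - 2 * X ^ 2 * F) * hF' +
    (4 * X ^ 2 * d⁄dX ℚ F + 1 + X + 2 * X * F) * schroederSeries_eq

theorem schroederRecurrence_schroederNumber :
    SchroederRecurrence fun n => (schroederNumber n : ℚ) := by
  intro n
  have := congrArg (coeff (n + 3)) schroederSeries_differential_eq
  simp only [map_add, map_sub, map_nsmul, coeff_succ_X_mul, coeff_derivative, coeff_X, coeff_one,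
    coeff_mk, schroederSeries] at this
  simp only [nsmul_eq_mul, Nat.cast_add, Nat.cast_one, Nat.cast_ofNat, Nat.reduceEqDiff,
    ↓reduceIte, add_zero] at this
  linear_combination this

end GeneratingFunction

def summand (n j : ℕ) : ℚ :=
  (n.choose j : ℚ) * (if j = 0 then 0 else (n.choose (j - 1) : ℚ)) * 2 ^ j

theorem summand_eq_zero_of_lt {n j : ℕ} (h : n < j) : summand n j = 0 := by
  simp [summand, Nat.choose_eq_zero_of_lt h]

theorem sum_summand_range_of_le {n N : ℕ} (h : n + 1 ≤ N) :
    ∑ j ∈ range N, summand n j = ∑ j ∈ range (n + 1), summand n j :=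
  (sum_subset (range_subset_range.2 h) fun j _ hj =>
    summand_eq_zero_of_lt (by simpa using hj)).symm

noncomputable def schroederFormula (k : ℕ) : ℚ := (1 / k) * ∑ j ∈ range (k + 1), summand k j

/-- Zeilberger's certificate for `summand_telescope`. -/
def certificate (m j : ℕ) : ℚ :=
  if j ≤ 1 then 0 else
    (m + 2) / (m + 1) * ((j : ℚ) ^ 2 - 3 * j - 2 * m ^ 2 - 5 * m - 1) * 2 ^ j *
      (m + 1).choose (j - 2) * (m + 1).choose (j - 1)

theorem summand_telescope (m j : ℕ) :
    (m + 1) * (m + 3) * summand (m + 2) j - 3 * (2 * m + 3) * (m + 2) * summand (m + 1) j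
      + (m + 1) * (m + 2) * summand m j = certificate m (j + 1) - certificate m j := by
  rcases j with _ | _ | j
  · simp [summand, certificate]
  · simp only [summand, certificate, Nat.choose_zero_right, Nat.choose_one_right, one_ne_zero,
      ↓reduceIte, tsub_self, Nat.reduceAdd, Nat.not_ofNat_le_one, Nat.add_one_sub_one, le_refl,
      Nat.cast_add, Nat.cast_ofNat, Nat.cast_one]
    field_simp
    ring
  have hm : (m : ℚ) + 1 ≠ 0 := by positivity
  have e1 : (m.choose (j + 2) : ℚ) = (m + 1).choose (j + 2) * (m - 1 - j) / (m + 1) := by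
    rw [eq_div_iff hm]
    linear_combination (norm := (push_cast; ring)) Nat.cast_choose_mul_succ_eq (R := ℚ) m (j + 2)
  have e2 : (m.choose (j + 1) : ℚ) = (m + 1).choose (j + 1) * (m - j) / (m + 1) := by
    rw [eq_div_iff hm]
    linear_combination (norm := (push_cast; ring)) Nat.cast_choose_mul_succ_eq (R := ℚ) m (j + 1)
  have e3 : ((m + 1).choose (j + 2) : ℚ) = (m + 1).choose (j + 1) * (m - j) / (j + 2) := by
    rw [eq_div_iff (by positivity)]
    linear_combination (norm := (push_cast; ring))
      Nat.cast_choose_succ_right_eq (R := ℚ) (m + 1) (j + 1)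
  have e4 : ((m + 1).choose (j + 1) : ℚ) = (m + 1).choose j * (m + 1 - j) / (j + 1) := by
    rw [eq_div_iff (by positivity)]
    linear_combination (norm := (push_cast; ring))
      Nat.cast_choose_succ_right_eq (R := ℚ) (m + 1) j
  simp only [summand, certificate, Nat.choose_succ_succ (m + 1), add_tsub_cancel_right,
    show j + 2 + 1 - 2 = j + 1 by omega, if_neg (by omega : ¬ j + 2 = 0),
    if_neg (by omega : ¬ j + 2 ≤ 1), if_neg (by omega : ¬ j + 2 + 1 ≤ 1)]
  push_cast
  rw [e1, e2, e3, e4]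
  field_simp
  ring

theorem sum_summand_recurrence (m : ℕ) :
    (m + 1) * (m + 3) * ∑ j ∈ range (m + 3), summand (m + 2) j =
      3 * (2 * m + 3) * (m + 2) * ∑ j ∈ range (m + 2), summand (m + 1) j
        - (m + 1) * (m + 2) * ∑ j ∈ range (m + 1), summand m j := by
  have htelescope := sum_range_sub (certificate m) (m + 3)
  have hfirst : certificate m 0 = 0 := by simp [certificate]
  have hlast : certificate m (m + 3) = 0 := by simp [certificate]
  simp only [← summand_telescope, sum_add_distrib, sum_sub_distrib, ← mul_sum, hfirst, hlast,
    sum_summand_range_of_le (by omega : m + 1 + 1 ≤ m + 3),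
    sum_summand_range_of_le (by omega : m + 1 ≤ m + 3)] at htelescope
  linear_combination htelescope

theorem schroederRecurrence_schroederFormula : SchroederRecurrence schroederFormula := by
  intro n
  have h := sum_summand_recurrence (n + 1)
  simp only [schroederFormula]
  push_cast at h ⊢
  field_simp
  linear_combination h

theorem schroederFormula_one : schroederFormula 1 = 2 := by
  norm_num [schroederFormula, summand, sum_range_succ]

theorem schroederFormula_two : schroederFormula 2 = 6 := by
  norm_num [schroederFormula, summand, sum_range_succ]

end Schroeder

open Schroeder

/-- The `k`-th large Schröder number equals
`(1/k) ∑_{j=0}^{k} C(k,j) C(k,j-1) 2^j`, with the convention `C(k,-1) = 0`. -/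
theorem schroeder_number_eq (k : ℕ) (hk : 0 < k) :
    (({l : List (ℕ × ℕ) | IsSchroederPath k l}.ncard : ℚ)) =
      (1 / k) * ∑ j ∈ Finset.range (k + 1),
        (Nat.choose k j : ℚ) * (if j = 0 then 0 else (Nat.choose k (j - 1) : ℚ)) * 2 ^ j := by
  obtain ⟨n, rfl⟩ := Nat.exists_eq_add_one.2 hk
  exact schroederRecurrence_schroederNumber.eq_succ_of_eq_one_of_eq_two
    schroederRecurrence_schroederFormula
    (by simp [schroederNumber_one, schroederFormula_one])
    (by simp [schroederNumber_two, schroederFormula_two]) n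
end

section
/- For the Laguerre Unitary Ensemble with parameter b and dimension n, the k-th moment of the eigenvalue density equals M(k,n) = (1/k)·∑_{j=0}^{min(n,k)} C(k,j)·C(k,j-1)·(b+n)_{(k-j+1)}/(n+1)_{(-j)} for every positive integer k, where (a)_{(m)} = Γ(a+m)/Γ(a). -/
open Polynomial Finset MeasureTheory Real
open scoped fwdDiff

/-!
Orthogonality for the weight `x ^ b * exp (-x)` determines a monic polynomial of each degree, so
`L j` is the explicit monic Laguerre polynomial `ℓ_j = ∑ᵢ (-1)^(j-i) C(j,i) (b+i+1)_(j-i) Xⁱ`.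
Since `∫ xʳ w = Γ(b+1) (b+1)_r`, the integral of `xʳ ℓ_j` is `Γ(b+1) (b+1)_j` times the `j`-th
forward difference of `i ↦ (b+1+i)_r` at `0`, which is `r↓j (b+1+j)_(r-j)`; hence
`∫ xʳ ℓ_j w = r↓j ∫ xʳ w`. Expanding one factor of `ℓ_j²` gives the normalised `k`-th moment of
level `j` as `∑ᵢ (-1)^(j-i) C(j,i) C(k+i,j) (b+1+i)_k`. Summing over `j < n` collapses, by trinomial
revision and partial alternating sums of binomials, to a single sum over `i`; expanding
`(b+1+i)_k = (b+n-(n-1-i))_k` by the Vandermonde identity for rising factorials and evaluating the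
remaining binomial sum as an iterated difference of `C(·,k)` gives the closed form.
-/


section Pochhammer

variable {R : Type*}

theorem ascPochhammer_eval_add_nat [CommSemiring R] (m n : ℕ) (x : R) :
    (ascPochhammer R (m + n)).eval x =
      (ascPochhammer R m).eval x * (ascPochhammer R n).eval (x + m) := by
  simp [← ascPochhammer_mul, eval_comp]

theorem ascPochhammer_eval_add [CommSemiring R] (k : ℕ) (x y : R) :
    (ascPochhammer R k).eval (x + y) = ∑ ij ∈ antidiagonal k,
      k.choose ij.1 * ((ascPochhammer R ij.1).eval x * (ascPochhammer R ij.2).eval y) := by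
  induction k with
  | zero => simp
  | succ k ih =>
    rw [sum_antidiagonal_choose_succ_mul
      (fun i j ↦ (ascPochhammer R i).eval x * (ascPochhammer R j).eval y),
      ascPochhammer_succ_eval, ih, sum_mul, ← sum_add_distrib]
    refine sum_congr rfl fun ij hij ↦ ?_
    rw [HasAntidiagonal.mem_antidiagonal] at hij
    rw [Nat.choose_symm_of_eq_add hij.symm, ascPochhammer_succ_eval, ascPochhammer_succ_eval, ← hij]
    push_cast
    ring

variable [CommRing R]

theorem fwdDiff_ascPochhammer_eval (r : ℕ) :
    Δ_[1] (fun x : R ↦ (ascPochhammer R r).eval x) =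
      fun x : R ↦ r * (ascPochhammer R (r - 1)).eval (x + 1) := by
  ext x
  cases r with
  | zero => simp [fwdDiff]
  | succ r =>
    rw [fwdDiff, ascPochhammer_succ_eval, ascPochhammer_succ_left, eval_mul, eval_comp]
    simp only [eval_X, eval_add, eval_one, Nat.add_sub_cancel]
    push_cast
    ring

theorem fwdDiff_iter_ascPochhammer_eval (r j : ℕ) :
    (Δ_[1])^[j] (fun x : R ↦ (ascPochhammer R r).eval x) =
      fun x : R ↦ (r.descFactorial j : R) * (ascPochhammer R (r - j)).eval (x + j) := by
  induction j generalizing r with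
  | zero => simp
  | succ j ih =>
    ext x
    have hshift : (fun x : R ↦ r * (ascPochhammer R (r - 1)).eval (x + 1)) =
        (r : R) • fun x ↦ (ascPochhammer R (r - 1)).eval (x + 1) := rfl
    rw [Function.iterate_succ_apply, fwdDiff_ascPochhammer_eval, hshift, fwdDiff_iter_const_smul,
      Pi.smul_apply, fwdDiff_iter_comp_add (f := fun x : R ↦ (ascPochhammer R (r - 1)).eval x), ih]
    cases r with
    | zero => simp
    | succ r =>
      simp only [Nat.succ_descFactorial_succ, Nat.add_sub_cancel, Nat.add_sub_add_right,
        smul_eq_mul]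
      push_cast
      ring_nf

end Pochhammer

theorem Gamma_add_nat_eq_mul_ascPochhammer {x : ℝ} (hx : 0 < x) (n : ℕ) :
    Gamma (x + n) = Gamma x * (ascPochhammer ℝ n).eval x := by
  induction n with
  | zero => simp
  | succ n ih =>
    rw [Nat.cast_succ, ← add_assoc, Gamma_add_one (by positivity), ih, ascPochhammer_succ_eval]
    ring

-- For `j > n` both sides vanish: `Γ` is `0` at non-positive integers and `x / 0 = 0`.
theorem Gamma_natCast_add_one_div_Gamma_sub (n j : ℕ) :
    Gamma (n + 1) / Gamma (n + 1 - j) = n.descFactorial j := by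
  rcases le_or_gt j n with hjn | hnj
  · have hsub : (n : ℝ) + 1 - j = ((n - j : ℕ) : ℝ) + 1 := by push_cast [hjn]; ring
    rw [hsub, Gamma_nat_eq_factorial, Gamma_nat_eq_factorial, ← Nat.factorial_mul_descFactorial hjn]
    push_cast
    field_simp
  · have hneg : (n : ℝ) + 1 - j = -((j - n - 1 : ℕ) : ℝ) := by
      rw [Nat.sub_sub, Nat.cast_sub hnj]
      push_cast
      ring
    rw [hneg, Gamma_neg_nat_eq_zero, div_zero, Nat.descFactorial_eq_zero_iff_lt.mpr hnj,
      Nat.cast_zero]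

section LaguerreWeight

variable {b : ℝ}

theorem eqOn_rpow_mul_exp_neg_mul_pow (b : ℝ) (i : ℕ) :
    Set.EqOn (fun x : ℝ ↦ x ^ b * exp (-x) * x ^ i) (fun x ↦ exp (-x) * x ^ (b + 1 + i - 1))
      (Set.Ioi 0) := fun x (hx : 0 < x) ↦ by
  simp only [show b + 1 + i - 1 = b + i by ring, rpow_add hx, rpow_natCast]
  ring

theorem integrableOn_rpow_mul_exp_neg_mul_pow (hb : -1 < b) (i : ℕ) :
    IntegrableOn (fun x : ℝ ↦ x ^ b * exp (-x) * x ^ i) (Set.Ioi 0) :=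
  (GammaIntegral_convergent (by linarith [(Nat.cast_nonneg i : (0 : ℝ) ≤ i)])).congr_fun
    (eqOn_rpow_mul_exp_neg_mul_pow b i).symm measurableSet_Ioi

theorem integral_rpow_mul_exp_neg_mul_pow (hb : -1 < b) (i : ℕ) :
    ∫ x in Set.Ioi 0, x ^ b * exp (-x) * x ^ i = Gamma (b + 1 + i) := by
  rw [Gamma_eq_integral (by linarith [(Nat.cast_nonneg i : (0 : ℝ) ≤ i)])]
  exact setIntegral_congr_fun measurableSet_Ioi (eqOn_rpow_mul_exp_neg_mul_pow b i)

theorem integrableOn_rpow_mul_exp_neg_mul_eval (hb : -1 < b) (p : ℝ[X]) :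
    IntegrableOn (fun x : ℝ ↦ x ^ b * exp (-x) * p.eval x) (Set.Ioi 0) := by
  simp_rw [eval_eq_sum_range, mul_sum]
  exact integrable_finsetSum _ fun i _ ↦ IntegrableOn.congr_fun
    ((integrableOn_rpow_mul_exp_neg_mul_pow hb i).const_mul (p.coeff i)) (fun x _ ↦ by ring)
    measurableSet_Ioi

noncomputable def laguerreFunctional (hb : -1 < b) : ℝ[X] →ₗ[ℝ] ℝ where
  toFun p := ∫ x in Set.Ioi 0, x ^ b * exp (-x) * p.eval x
  map_add' p q := by
    simp only [eval_add, mul_add]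
    exact integral_add (integrableOn_rpow_mul_exp_neg_mul_eval hb p)
      (integrableOn_rpow_mul_exp_neg_mul_eval hb q)
  map_smul' c p := by
    simp only [eval_smul, smul_eq_mul, RingHom.id_apply, ← integral_const_mul]
    congr 1 with x
    ring

theorem laguerreFunctional_apply (hb : -1 < b) (p : ℝ[X]) :
    laguerreFunctional hb p = ∫ x in Set.Ioi 0, x ^ b * exp (-x) * p.eval x :=
  rfl

theorem laguerreFunctional_X_pow (hb : -1 < b) (i : ℕ) :
    laguerreFunctional hb (X ^ i) = Gamma (b + 1) * (ascPochhammer ℝ i).eval (b + 1) := by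
  rw [laguerreFunctional_apply, ← Gamma_add_nat_eq_mul_ascPochhammer (by linarith),
    ← integral_rpow_mul_exp_neg_mul_pow hb]
  simp

theorem eq_zero_of_laguerreFunctional_mul_self_eq_zero (hb : -1 < b) {p : ℝ[X]}
    (h : laguerreFunctional hb (p * p) = 0) : p = 0 := by
  by_contra hp
  set μ := volume.restrict (Set.Ioi (0 : ℝ))
  have hnonneg : 0 ≤ᵐ[μ] fun x ↦ x ^ b * exp (-x) * (p * p).eval x :=
    ae_restrict_of_forall_mem measurableSet_Ioi fun x (hx : 0 < x) ↦ by
      simp only [Pi.zero_apply, eval_mul]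
      exact mul_nonneg (mul_nonneg (rpow_nonneg hx.le b) (exp_pos _).le) (mul_self_nonneg _)
  have hzero := (integral_eq_zero_iff_of_nonneg_ae hnonneg
    (integrableOn_rpow_mul_exp_neg_mul_eval hb (p * p))).mp h
  have hroots : ∀ᵐ x ∂μ, ¬p.IsRoot x :=
    ae_restrict_of_ae <|
      measure_eq_zero_iff_ae_notMem.mp ((finite_setOfPred_isRoot hp).measure_zero _)
  have : (ae μ).NeBot := ae_neBot.mpr (by simp [μ, Measure.restrict_eq_zero])
  obtain ⟨x, hx, hroot, hpos⟩ :=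
    (hzero.and (hroots.and (ae_restrict_mem (μ := volume) measurableSet_Ioi))).exists
  simp only [Pi.zero_apply, eval_mul] at hx
  exact (mul_pos (mul_pos (rpow_pos_of_pos hpos b) (exp_pos _)) (mul_self_pos.mpr hroot)).ne' hx

end LaguerreWeight

section OrthogonalPolynomials

variable {R : Type*} [CommRing R] (φ : R[X] →ₗ[R] R)

theorem map_mul_eq_zero_of_degree_lt {L : ℕ → R[X]} (hmonic : ∀ m, (L m).Monic)
    (hdeg : ∀ m, (L m).natDegree = m) (horth : ∀ m l, m ≠ l → φ (L m * L l) = 0)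
    {p : R[X]} {m : ℕ} (hp : p.degree < m) : φ (p * L m) = 0 := by
  suffices h : ∀ d : ℕ, ∀ p : R[X], p.degree < d → ∀ m, d ≤ m → φ (p * L m) = 0 from
    h m p hp m le_rfl
  intro d
  induction d with
  | zero =>
    intro p hp m _
    rw [show p = 0 by simpa using hp, zero_mul, map_zero]
  | succ d ih =>
    intro p hp m hm
    have hq : (p - C (p.coeff d) * L d).degree < d := by
      rw [degree_lt_iff_coeff_zero]
      intro N hN
      rw [coeff_sub, coeff_C_mul]
      rcases hN.eq_or_lt with rfl | hN
      · have hlead : (L d).coeff d = 1 := by simpa [hdeg] using (hmonic d).coeff_natDegree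
        rw [hlead, mul_one, sub_self]
      · have hpN : p.coeff N = 0 := coeff_eq_zero_of_degree_lt (hp.trans_le (by exact_mod_cast hN))
        have hLN : (L d).coeff N = 0 := coeff_eq_zero_of_natDegree_lt (by rwa [hdeg])
        rw [hpN, hLN, mul_zero, sub_zero]
    have hsplit : p * L m = (p - C (p.coeff d) * L d) * L m + p.coeff d • (L d * L m) := by
      rw [smul_eq_C_mul]
      ring
    rw [hsplit, map_add, map_smul, ih _ hq m (by omega), horth d m (by omega), smul_zero,
      add_zero]

theorem Polynomial.Monic.eq_of_forall_degree_lt_map_mul_eq_zero [Nontrivial R]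
    (hφ : ∀ p, φ (p * p) = 0 → p = 0) {P Q : R[X]} {m : ℕ} (hP : P.Monic) (hQ : Q.Monic)
    (hPm : P.natDegree = m) (hQm : Q.natDegree = m)
    (hPorth : ∀ p : R[X], p.degree < m → φ (p * P) = 0)
    (hQorth : ∀ p : R[X], p.degree < m → φ (p * Q) = 0) : P = Q := by
  have hlt : (P - Q).degree < m := by
    have hdeg : P.degree = Q.degree := by
      rw [degree_eq_natDegree hP.ne_zero, degree_eq_natDegree hQ.ne_zero, hPm, hQm]
    simpa [degree_eq_natDegree hP.ne_zero, hPm] using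
      degree_sub_lt_left hdeg hP.ne_zero (by rw [hP.leadingCoeff, hQ.leadingCoeff])
  rw [← sub_eq_zero]
  apply hφ
  rw [mul_sub, map_sub, hPorth _ hlt, hQorth _ hlt, sub_zero]

end OrthogonalPolynomials

theorem degree_sum_range_C_mul_X_pow_lt {R : Type*} [Semiring R] (j : ℕ) (c : ℕ → R) :
    (∑ i ∈ range j, C (c i) * X ^ i).degree < (j : WithBot ℕ) :=
  mem_degreeLT.mp <| Submodule.sum_mem _ fun i hi ↦
    mem_degreeLT.mpr <| (degree_C_mul_X_pow_le i (c i)).trans_lt (by exact_mod_cast mem_range.mp hi)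

section MonicLaguerre

variable {b : ℝ}

noncomputable def laguerreCoeff (b : ℝ) (j i : ℕ) : ℝ :=
  (-1) ^ (j - i) * j.choose i * (ascPochhammer ℝ (j - i)).eval (b + 1 + i)

noncomputable def monicLaguerre (b : ℝ) (j : ℕ) : ℝ[X] :=
  ∑ i ∈ range (j + 1), C (laguerreCoeff b j i) * X ^ i

theorem monicLaguerre_eq_X_pow_add (b : ℝ) (j : ℕ) :
    monicLaguerre b j = X ^ j + ∑ i ∈ range j, C (laguerreCoeff b j i) * X ^ i := by
  rw [monicLaguerre, sum_range_succ, add_comm]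
  simp [laguerreCoeff]

theorem monicLaguerre_monic (b : ℝ) (j : ℕ) : (monicLaguerre b j).Monic := by
  rw [monicLaguerre_eq_X_pow_add]
  exact monic_X_pow_add (degree_sum_range_C_mul_X_pow_lt j _)

theorem natDegree_monicLaguerre (b : ℝ) (j : ℕ) : (monicLaguerre b j).natDegree = j := by
  rw [monicLaguerre_eq_X_pow_add, natDegree_add_eq_left_of_degree_lt, natDegree_X_pow]
  simpa using degree_sum_range_C_mul_X_pow_lt j _

theorem laguerreCoeff_mul_ascPochhammer_eval {i j : ℕ} (hij : i ≤ j) :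
    laguerreCoeff b j i * (ascPochhammer ℝ i).eval (b + 1) =
      (-1) ^ (j - i) * j.choose i * (ascPochhammer ℝ j).eval (b + 1) := by
  rw [laguerreCoeff, ← Nat.add_sub_cancel' hij, ascPochhammer_eval_add_nat, Nat.add_sub_cancel_left]
  ring

theorem X_pow_mul_monicLaguerre (b : ℝ) (r j : ℕ) :
    X ^ r * monicLaguerre b j = ∑ i ∈ range (j + 1), laguerreCoeff b j i • X ^ (i + r) := by
  rw [monicLaguerre, mul_sum]
  refine sum_congr rfl fun i _ ↦ ?_
  rw [smul_eq_C_mul, pow_add]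
  ring

theorem laguerreFunctional_X_pow_mul_monicLaguerre (hb : -1 < b) (r j : ℕ) :
    laguerreFunctional hb (X ^ r * monicLaguerre b j) =
      r.descFactorial j * laguerreFunctional hb (X ^ r) := by
  -- Against `X ^ r`, the coefficients of `ℓ_j` take a `j`-th forward difference of `(·)_r`.
  have hshift := fwdDiff_iter_eq_sum_shift 1 (fun x : ℝ ↦ (ascPochhammer ℝ r).eval x) j (b + 1)
  rw [fwdDiff_iter_ascPochhammer_eval] at hshift
  calc laguerreFunctional hb (X ^ r * monicLaguerre b j)
      = Gamma (b + 1) * (ascPochhammer ℝ j).eval (b + 1) * ∑ i ∈ range (j + 1),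
          ((-1) ^ (j - i) * j.choose i : ℤ) • (ascPochhammer ℝ r).eval (b + 1 + i • 1) := by
        rw [X_pow_mul_monicLaguerre, map_sum, mul_sum]
        refine sum_congr rfl fun i hi ↦ ?_
        have hcoeff :=
          laguerreCoeff_mul_ascPochhammer_eval (b := b) (Nat.lt_succ_iff.mp (mem_range.mp hi))
        rw [map_smul, laguerreFunctional_X_pow, ascPochhammer_eval_add_nat, smul_eq_mul,
          zsmul_eq_mul, nsmul_one]
        push_cast
        linear_combination (Gamma (b + 1) * (ascPochhammer ℝ r).eval (b + 1 + i)) * hcoeff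
    _ = r.descFactorial j * laguerreFunctional hb (X ^ r) := by
        rw [← hshift, laguerreFunctional_X_pow]
        rcases le_or_gt j r with hjr | hrj
        · rw [← Nat.add_sub_cancel' hjr, ascPochhammer_eval_add_nat, Nat.add_sub_cancel_left]
          ring
        · simp [Nat.descFactorial_eq_zero_iff_lt.mpr hrj]

theorem laguerreFunctional_mul_monicLaguerre_eq_zero (hb : -1 < b) {p : ℝ[X]} {j : ℕ}
    (hp : p.degree < j) : laguerreFunctional hb (p * monicLaguerre b j) = 0 := by
  rw [as_sum_range_C_mul_X_pow p, sum_mul, map_sum]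
  refine sum_eq_zero fun r _ ↦ ?_
  rcases lt_or_ge r j with hrj | hjr
  · rw [mul_assoc, C_mul', map_smul, laguerreFunctional_X_pow_mul_monicLaguerre,
      Nat.descFactorial_eq_zero_iff_lt.mpr hrj]
    simp
  · rw [coeff_eq_zero_of_degree_lt (hp.trans_le (by exact_mod_cast hjr))]
    simp

theorem laguerreFunctional_X_pow_mul_monicLaguerre_mul_self (hb : -1 < b) (k j : ℕ) :
    laguerreFunctional hb (X ^ k * (monicLaguerre b j * monicLaguerre b j)) =
      j.factorial * (Gamma (b + 1) * (ascPochhammer ℝ j).eval (b + 1)) *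
        ∑ i ∈ range (j + 1), (-1) ^ (j - i) * j.choose i * (k + i).choose j *
          (ascPochhammer ℝ k).eval (b + 1 + i) := by
  rw [← mul_assoc, X_pow_mul_monicLaguerre, sum_mul, map_sum, mul_sum]
  refine sum_congr rfl fun i hi ↦ ?_
  rw [smul_mul_assoc, map_smul, laguerreFunctional_X_pow_mul_monicLaguerre,
    laguerreFunctional_X_pow, ascPochhammer_eval_add_nat, smul_eq_mul, add_comm k i,
    Nat.descFactorial_eq_factorial_mul_choose]
  have hcoeff :=
    laguerreCoeff_mul_ascPochhammer_eval (b := b) (Nat.lt_succ_iff.mp (mem_range.mp hi))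
  push_cast
  linear_combination (j.factorial * ((i + k).choose j) * Gamma (b + 1) *
    (ascPochhammer ℝ k).eval (b + 1 + i)) * hcoeff

theorem eq_monicLaguerre_of_orthogonal (hb : -1 < b) {L : ℕ → ℝ[X]} (hmonic : ∀ m, (L m).Monic)
    (hdeg : ∀ m, (L m).natDegree = m)
    (horth : ∀ m l, m ≠ l → laguerreFunctional hb (L m * L l) = 0) (m : ℕ) :
    L m = monicLaguerre b m :=
  (hmonic m).eq_of_forall_degree_lt_map_mul_eq_zero (laguerreFunctional hb)
    (fun _ ↦ eq_zero_of_laguerreFunctional_mul_self_eq_zero hb) (monicLaguerre_monic b m)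
    (hdeg m) (natDegree_monicLaguerre b m)
    (fun _ ↦ map_mul_eq_zero_of_degree_lt _ hmonic hdeg horth)
    (fun _ ↦ laguerreFunctional_mul_monicLaguerre_eq_zero hb)

end MonicLaguerre

theorem sum_range_neg_one_pow_mul_choose_mul_choose_add {n k i : ℕ} (hk : 0 < k) (hi : i < n) :
    ∑ j ∈ range n, (-1 : ℤ) ^ (j - i) * (j.choose i * (k + i).choose j) =
      (-1) ^ (n - 1 - i) * (k - 1).choose (n - 1 - i) * (k + i).choose k := by
  obtain ⟨d, rfl⟩ : ∃ d, n = i + (d + 1) := ⟨n - i - 1, by omega⟩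
  obtain ⟨k, rfl⟩ : ∃ k', k = k' + 1 := ⟨k - 1, by omega⟩
  have trinomial (m : ℕ) : (i + m).choose i * (k + 1 + i).choose (i + m) =
      (k + 1).choose m * (k + 1 + i).choose (k + 1) := by
    rw [mul_comm, Nat.choose_mul (by omega), Nat.add_sub_cancel_left, Nat.add_sub_cancel,
      Nat.choose_symm_add, mul_comm]
  rw [sum_range_add, sum_eq_zero fun j hj ↦ by simp [Nat.choose_eq_zero_of_lt (mem_range.1 hj)],
    zero_add]
  simp only [Nat.add_sub_cancel_left]
  simp_rw [← Nat.cast_mul, trinomial, Nat.cast_mul, ← mul_assoc, ← sum_mul]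
  rw [Int.alternating_sum_range_choose_eq_choose, show i + (d + 1) - 1 - i = d by omega,
    Nat.add_sub_cancel]

theorem sum_range_neg_one_pow_mul_choose_mul_choose_add_sub {m k : ℕ} (y : ℕ) (hmk : m ≤ k) :
    ∑ t ∈ range (m + 1), (-1 : ℤ) ^ t * m.choose t * (y + m - t).choose k = y.choose (k - m) := by
  have hdiff := congr_fun (fwdDiff_iter_choose (k - m) m) y
  rw [Nat.add_sub_cancel' hmk, fwdDiff_iter_eq_sum_shift] at hdiff
  rw [← sum_range_reflect, ← hdiff]
  refine sum_congr rfl fun t ht ↦ ?_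
  have ht : t ≤ m := Nat.lt_succ_iff.mp (mem_range.mp ht)
  rw [Nat.add_sub_cancel, Nat.choose_symm ht, smul_eq_mul, nsmul_one, Nat.cast_id,
    show y + m - (m - t) = y + t by omega]

theorem sum_range_neg_one_pow_mul_choose_mul_choose_mul_choose {n k s : ℕ} (hk : 0 < k) :
    ∑ u ∈ range n, (-1 : ℤ) ^ u * (k - 1).choose u * u.choose s * (k + n - 1 - u).choose k =
      (-1) ^ s * (k - 1).choose s * n.choose (s + 1) := by
  by_cases hs : s < k ∧ s < n
  · obtain ⟨m, rfl⟩ : ∃ m, k = s + m + 1 := ⟨k - s - 1, by omega⟩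
    obtain ⟨e, rfl⟩ : ∃ e, n = s + (e + 1) := ⟨n - s - 1, by omega⟩
    set g : ℕ → ℤ := fun t ↦ (-1) ^ t * m.choose t * (s + e + 1 + m - t).choose (s + m + 1)
    have hterm (t : ℕ) : (-1 : ℤ) ^ (s + t) * (s + m + 1 - 1).choose (s + t) * (s + t).choose s *
        (s + m + 1 + (s + (e + 1)) - 1 - (s + t)).choose (s + m + 1) =
          (-1) ^ s * (s + m).choose s * g t := by
      have trinomial := Nat.choose_mul (n := s + m) (k := s + t) (s := s) (by omega)
      rw [Nat.add_sub_cancel_left, Nat.add_sub_cancel_left] at trinomial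
      rw [Nat.add_sub_cancel, mul_assoc _ _ ((s + t).choose s : ℤ), ← Nat.cast_mul, trinomial,
        show s + m + 1 + (s + (e + 1)) - 1 - (s + t) = s + e + 1 + m - t by omega]
      push_cast
      ring
    have hlow : ∑ t ∈ range (e + 1), g t = ∑ t ∈ range (m + 1), g t := by
      refine (sum_subset (range_subset_range.mpr (by omega : e + 1 ≤ m + e + 1)) ?_).trans
        (sum_subset (range_subset_range.mpr (by omega : m + 1 ≤ m + e + 1)) ?_).symm
      · intro t _ ht
        simp [g, Nat.choose_eq_zero_of_lt (by simp at ht; omega : s + e + 1 + m - t < s + m + 1)]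
      · intro t _ ht
        simp [g, Nat.choose_eq_zero_of_lt (by simp at ht; omega : m < t)]
    rw [sum_range_add, sum_eq_zero fun u hu ↦ by simp [Nat.choose_eq_zero_of_lt (mem_range.1 hu)],
      zero_add]
    simp_rw [hterm, ← mul_sum, hlow, g, sum_range_neg_one_pow_mul_choose_mul_choose_add_sub _
      (by omega : m ≤ s + m + 1)]
    rw [show s + m + 1 - m = s + 1 by omega, show s + (e + 1) = s + e + 1 by omega,
      Nat.add_sub_cancel]
  · rw [not_and_or, not_lt, not_lt] at hs
    have hrhs : ((k - 1).choose s * n.choose (s + 1) : ℤ) = 0 := by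
      rcases hs with hs | hs
      · simp [Nat.choose_eq_zero_of_lt (by omega : k - 1 < s)]
      · simp [Nat.choose_eq_zero_of_lt (by omega : n < s + 1)]
    rw [mul_assoc, hrhs, mul_zero]
    refine sum_eq_zero fun u hu ↦ ?_
    rcases lt_or_ge u s with hus | hsu
    · simp [Nat.choose_eq_zero_of_lt hus]
    · have : k - 1 < u := by have := mem_range.1 hu; omega
      simp [Nat.choose_eq_zero_of_lt this]

section LaguerreSums

variable {R : Type*} [CommRing R]

theorem sum_range_sum_range_neg_one_pow_mul_choose_mul_choose {n k : ℕ} (hk : 0 < k)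
    (f : ℕ → R) :
    ∑ j ∈ range n, ∑ i ∈ range (j + 1), (-1) ^ (j - i) * j.choose i * (k + i).choose j * f i =
      ∑ i ∈ range n, (-1) ^ (n - 1 - i) * (k - 1).choose (n - 1 - i) * (k + i).choose k * f i := by
  have hextend : ∀ j ∈ range n,
      ∑ i ∈ range (j + 1), (-1 : R) ^ (j - i) * j.choose i * (k + i).choose j * f i =
        ∑ i ∈ range n, (-1) ^ (j - i) * j.choose i * (k + i).choose j * f i := by
    intro j hj
    refine sum_subset (range_subset_range.mpr (mem_range.mp hj)) fun i _ hi ↦ ?_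
    simp [Nat.choose_eq_zero_of_lt (by simpa using hi : j < i)]
  rw [sum_congr rfl hextend, sum_comm]
  refine sum_congr rfl fun i hi ↦ ?_
  have hcoeff := congrArg (Int.cast : ℤ → R)
    (sum_range_neg_one_pow_mul_choose_mul_choose_add hk (mem_range.mp hi))
  push_cast at hcoeff
  rw [← sum_mul, ← hcoeff]
  simp only [mul_assoc]

theorem ascPochhammer_eval_sub_natCast (k u : ℕ) (y : R) :
    (ascPochhammer R k).eval (y - u) = ∑ s ∈ range (k + 1),
      k.choose s * ((-1) ^ s * (s.factorial * u.choose s)) * (ascPochhammer R (k - s)).eval y := by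
  rw [sub_eq_neg_add, ascPochhammer_eval_add, Nat.sum_antidiagonal_eq_sum_range_succ
    (fun i j ↦ (k.choose i : R) * ((ascPochhammer R i).eval (-(u : R)) *
      (ascPochhammer R j).eval y))]
  refine sum_congr rfl fun s _ ↦ ?_
  rw [ascPochhammer_eval_neg_eq_descPochhammer, descPochhammer_eval_eq_descFactorial,
    Nat.descFactorial_eq_factorial_mul_choose]
  push_cast
  ring

theorem sum_range_mul_ascPochhammer_eval_add {n k : ℕ} (hk : 0 < k) (y : R) :
    ∑ i ∈ range n, (-1) ^ (n - 1 - i) * (k - 1).choose (n - 1 - i) * (k + i).choose k *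
        (ascPochhammer R k).eval (y + 1 + i) =
      ∑ s ∈ range (k + 1), k.choose s * (k - 1).choose s * s.factorial * n.choose (s + 1) *
        (ascPochhammer R (k - s)).eval (y + n) := by
  have hreflect : ∀ u ∈ range n,
      (-1) ^ (n - 1 - (n - 1 - u)) * (k - 1).choose (n - 1 - (n - 1 - u)) *
        (k + (n - 1 - u)).choose k * (ascPochhammer R k).eval (y + 1 + (n - 1 - u : ℕ)) =
      (-1) ^ u * (k - 1).choose u * (k + n - 1 - u).choose k *
        (ascPochhammer R k).eval (y + n - u) := by
    intro u hu
    have hun := mem_range.mp hu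
    rw [show n - 1 - (n - 1 - u) = u by omega, show k + (n - 1 - u) = k + n - 1 - u by omega,
      Nat.cast_sub (by omega), Nat.cast_sub (by omega), Nat.cast_one]
    ring_nf
  rw [← sum_range_reflect, sum_congr rfl hreflect]
  simp_rw [ascPochhammer_eval_sub_natCast, mul_sum]
  rw [sum_comm]
  refine sum_congr rfl fun s _ ↦ ?_
  have hinner := congrArg (Int.cast : ℤ → R)
    (sum_range_neg_one_pow_mul_choose_mul_choose_mul_choose (n := n) (s := s) hk)
  push_cast at hinner
  have hsign : ((-1 : R) ^ s) ^ 2 = 1 := by rw [← pow_mul, mul_comm, pow_mul]; simp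
  calc _ = (k.choose s * (-1) ^ s * s.factorial * (ascPochhammer R (k - s)).eval (y + n)) *
        ∑ u ∈ range n, (-1 : R) ^ u * (k - 1).choose u * u.choose s * (k + n - 1 - u).choose k := by
        rw [mul_sum]
        exact sum_congr rfl fun u _ ↦ by ring
    _ = _ := by
        rw [hinner]
        linear_combination (k.choose s * (k - 1).choose s * s.factorial * n.choose (s + 1) *
          (ascPochhammer R (k - s)).eval (y + n)) * hsign

end LaguerreSums

theorem one_div_mul_sum_choose_mul_Gamma_div_eq {b : ℝ} {n k : ℕ} (hbn : 0 < b + n)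
    (hk : 0 < k) :
    (1 / (k : ℝ)) * ∑ j ∈ range (min n k + 1),
        (k.choose j : ℝ) * (if j = 0 then (0 : ℝ) else (k.choose (j - 1) : ℝ)) *
          (Gamma (b + n + k - j + 1) / Gamma (b + n)) * (Gamma (n + 1) / Gamma (n + 1 - j)) =
      ∑ s ∈ range (k + 1), k.choose s * (k - 1).choose s * s.factorial * n.choose (s + 1) *
        (ascPochhammer ℝ (k - s)).eval (b + n) := by
  simp_rw [Gamma_natCast_add_one_div_Gamma_sub]
  have hextend : ∑ j ∈ range (min n k + 1),
      (k.choose j : ℝ) * (if j = 0 then (0 : ℝ) else (k.choose (j - 1) : ℝ)) *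
        (Gamma (b + n + k - j + 1) / Gamma (b + n)) * n.descFactorial j =
      ∑ j ∈ range (k + 1),
      (k.choose j : ℝ) * (if j = 0 then (0 : ℝ) else (k.choose (j - 1) : ℝ)) *
        (Gamma (b + n + k - j + 1) / Gamma (b + n)) * n.descFactorial j := by
    refine sum_subset (range_subset_range.mpr (by omega)) fun j hjk hjn ↦ ?_
    rw [mem_range] at hjk hjn
    rw [Nat.descFactorial_eq_zero_iff_lt.mpr (by omega), Nat.cast_zero, mul_zero]
  have hchoose (s : ℕ) : (k : ℝ) * (k - 1).choose s = k.choose (s + 1) * (s + 1) := by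
    have := Nat.add_one_mul_choose_eq (k - 1) s
    rw [Nat.sub_add_cancel hk] at this
    exact_mod_cast this
  rw [hextend, sum_range_succ', sum_range_succ, Nat.choose_eq_zero_of_lt (by omega : k - 1 < k)]
  simp only [if_pos, Nat.cast_zero, mul_zero, zero_mul, add_zero, Nat.add_sub_cancel,
    add_eq_zero, one_ne_zero, and_false, if_false]
  rw [mul_sum]
  refine sum_congr rfl fun s hs ↦ ?_
  have hk0 : (k : ℝ) ≠ 0 := by exact_mod_cast hk.ne'
  have hGamma : Gamma (b + n + k - (s + 1 : ℕ) + 1) / Gamma (b + n) =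
      (ascPochhammer ℝ (k - s)).eval (b + n) := by
    rw [show b + n + k - (s + 1 : ℕ) + 1 = b + n + (k - s : ℕ) by
        push_cast [(mem_range.mp hs).le]; ring,
      Gamma_add_nat_eq_mul_ascPochhammer hbn, mul_div_cancel_left₀ _ (Gamma_pos_of_pos hbn).ne']
  rw [hGamma, Nat.descFactorial_eq_factorial_mul_choose, Nat.factorial_succ]
  push_cast
  rw [one_div_mul_eq_div, div_eq_iff hk0]
  linear_combination (-s.factorial * k.choose s * n.choose (s + 1) *
    (ascPochhammer ℝ (k - s)).eval (b + n)) * hchoose s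

theorem lue_positive_moments_general (b : ℝ) (hb : -1 < b) (n k : ℕ) (hn : 0 < n) (hk : 0 < k)
    (L : ℕ → Polynomial ℝ)
    (hmonic : ∀ m : ℕ, (L m).Monic)
    (hdeg : ∀ m : ℕ, (L m).natDegree = m)
    (horth : ∀ m l : ℕ, m ≠ l →
      ∫ x in Set.Ioi (0 : ℝ),
        x ^ b * Real.exp (-x) * (L m).eval x * (L l).eval x = 0) :
    ∫ x in Set.Ioi (0 : ℝ), x ^ (k : ℝ) *
        (x ^ b * Real.exp (-x) * ∑ j ∈ Finset.range n,
          ((L j).eval x) ^ 2 / (Real.Gamma ((j : ℝ) + 1) * Real.Gamma (b + (j : ℝ) + 1))) =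
      (1 / (k : ℝ)) * ∑ j ∈ Finset.range (min n k + 1),
        (Nat.choose k j : ℝ) * (if j = 0 then (0 : ℝ) else (Nat.choose k (j - 1) : ℝ)) *
          (Real.Gamma (b + (n : ℝ) + (k : ℝ) - (j : ℝ) + 1) / Real.Gamma (b + (n : ℝ))) *
          (Real.Gamma ((n : ℝ) + 1) / Real.Gamma ((n : ℝ) + 1 - (j : ℝ))) := by
  have hL : ∀ j, L j = monicLaguerre b j := eq_monicLaguerre_of_orthogonal hb hmonic hdeg
    fun m l hml ↦ by simpa only [laguerreFunctional_apply, eval_mul, mul_assoc] using horth m l hml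
  have hnorm (j : ℕ) : Gamma (j + 1) * Gamma (b + j + 1) =
      j.factorial * (Gamma (b + 1) * (ascPochhammer ℝ j).eval (b + 1)) := by
    rw [Gamma_nat_eq_factorial, add_right_comm, Gamma_add_nat_eq_mul_ascPochhammer (by linarith)]
  have hmoment : ∫ x in Set.Ioi (0 : ℝ), x ^ (k : ℝ) * (x ^ b * exp (-x) * ∑ j ∈ range n,
        (L j).eval x ^ 2 / (Gamma (j + 1) * Gamma (b + j + 1))) =
      laguerreFunctional hb (∑ j ∈ range n,
        (Gamma (j + 1) * Gamma (b + j + 1))⁻¹ • (X ^ k * (L j * L j))) := by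
    rw [laguerreFunctional_apply]
    congr 1 with x
    simp only [eval_finsetSum, eval_smul, eval_mul, eval_pow, eval_X, smul_eq_mul, rpow_natCast,
      mul_sum]
    exact sum_congr rfl fun j _ ↦ by ring
  have hpos (j : ℕ) : Gamma (j + 1) * Gamma (b + j + 1) ≠ 0 :=
    (mul_pos (Gamma_pos_of_pos (by positivity)) (Gamma_pos_of_pos (by linarith))).ne'
  rw [hmoment, map_sum]
  simp_rw [map_smul, hL, laguerreFunctional_X_pow_mul_monicLaguerre_mul_self, ← hnorm, smul_eq_mul,
    inv_mul_cancel_left₀ (hpos _)]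
  rw [sum_range_sum_range_neg_one_pow_mul_choose_mul_choose hk,
    one_div_mul_sum_choose_mul_Gamma_div_eq (by linarith [(Nat.one_le_cast.mpr hn : (1 : ℝ) ≤ n)])
      hk,
    sum_range_mul_ascPochhammer_eval_add hk]

/-- The `k`-th moment of the eigenvalue density of the `n`-dimensional Laguerre Unitary
Ensemble with parameter `b > -1`:
`M(k,n) = (1/k) ∑_{j=0}^{min(n,k)} C(k,j) C(k,j-1) (b+n)_{(k-j+1)}/(n+1)_{(-j)}`,
with `(a)_{(m)} = Γ(a+m)/Γ(a)` and the convention `C(k,-1) = 0`. -/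
theorem lue_positive_moments (b : ℝ) (hb : -1 < b) (n k : ℕ) (hn : 0 < n) (hk : 0 < k)
    (L : ℕ → Polynomial ℝ)
    (hmonic : ∀ m : ℕ, (L m).Monic)
    (hdeg : ∀ m : ℕ, (L m).natDegree = m)
    (horth : ∀ m l : ℕ, m ≠ l →
      ∫ x in Set.Ioi (0 : ℝ),
        x ^ b * Real.exp (-x) * (L m).eval x * (L l).eval x = 0)
    (hnorm : ∀ j : ℕ,
      ∫ x in Set.Ioi (0 : ℝ), x ^ b * Real.exp (-x) * ((L j).eval x) ^ 2 =
        Real.Gamma ((j : ℝ) + 1) * Real.Gamma (b + (j : ℝ) + 1)) :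
    ∫ x in Set.Ioi (0 : ℝ), x ^ (k : ℝ) *
        (x ^ b * Real.exp (-x) * ∑ j ∈ Finset.range n,
          ((L j).eval x) ^ 2 / (Real.Gamma ((j : ℝ) + 1) * Real.Gamma (b + (j : ℝ) + 1))) =
      (1 / (k : ℝ)) * ∑ j ∈ Finset.range (min n k + 1),
        (Nat.choose k j : ℝ) * (if j = 0 then (0 : ℝ) else (Nat.choose k (j - 1) : ℝ)) *
          (Real.Gamma (b + (n : ℝ) + (k : ℝ) - (j : ℝ) + 1) / Real.Gamma (b + (n : ℝ))) *
          (Real.Gamma ((n : ℝ) + 1) / Real.Gamma ((n : ℝ) + 1 - (j : ℝ))) :=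
  lue_positive_moments_general b hb n k hn hk L hmonic hdeg horth
end

section
/- The first moment of the Jacobi Unitary Ensemble eigenvalue density with parameters a, b and dimension n equals n(b+n)/(a+b+2n). -/
/-!
Write `s_j` for the subleading coefficient of `P j` (`nextCoeff`). Since
`x P_j = P_{j+1} + (s_j - s_{j+1}) P_j + (lower degree)`, orthogonality gives
`∫ x P_j² w / h_j = s_j - s_{j+1}`, so the first moment telescopes to `-s_n`.
The operator `D = x (1 - x) ∂² + (b + 1 - (a + b + 2) x) ∂` preserves degrees and, by Pearson's
equation for the weight `w = x^b (1 - x)^a`, is symmetric; hence `D P_n = -n (n + a + b + 1) P_n`,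
and comparing the coefficients of `x^(n-1)` gives `s_n = -n (b + n) / (a + b + 2n)`.
-/

open Polynomial Finset MeasureTheory Real Set

section

variable {a b : ℝ}

lemma integrableOn_jacobiWeight (ha : -1 < a) (hb : -1 < b) :
    IntegrableOn (fun x : ℝ => x ^ b * (1 - x) ^ a) (Ioo 0 1) := by
  have hxb : IntegrableOn (fun x : ℝ => x ^ b) (Icc 0 (1 / 2)) :=
    (intervalIntegrable_iff_integrableOn_Icc_of_le (by norm_num)).1
      (intervalIntegral.intervalIntegrable_rpow' hb)
  have hxa : IntegrableOn (fun x : ℝ => (1 - x) ^ a) (Icc (1 / 2) 1) := by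
    have := (intervalIntegral.intervalIntegrable_rpow' (a := 0) (b := 1 / 2) ha).comp_sub_left 1
    norm_num at this
    replace this := this.symm
    exact (intervalIntegrable_iff_integrableOn_Icc_of_le (by norm_num)).1 this
  have hleft : IntegrableOn (fun x : ℝ => x ^ b * (1 - x) ^ a) (Icc 0 (1 / 2)) :=
    hxb.mul_continuousOn (ContinuousOn.rpow_const (by fun_prop)
      fun x hx => Or.inl (by linarith [hx.2])) isCompact_Icc
  have hright : IntegrableOn (fun x : ℝ => x ^ b * (1 - x) ^ a) (Icc (1 / 2) 1) :=
    hxa.continuousOn_mul (ContinuousOn.rpow_const (by fun_prop)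
      fun x hx => Or.inl (by linarith [hx.1])) isCompact_Icc
  refine (hleft.union hright).mono_set fun x hx => ?_
  rcases le_total x (1 / 2) with h | h
  exacts [Or.inl ⟨hx.1.le, h⟩, Or.inr ⟨h, hx.2.le⟩]

lemma integrableOn_jacobiWeight_mul_eval (ha : -1 < a) (hb : -1 < b) (q : ℝ[X]) :
    IntegrableOn (fun x => x ^ b * (1 - x) ^ a * q.eval x) (Ioo 0 1) :=
  (integrableOn_jacobiWeight ha hb).mul_continuousOn_of_subset q.continuous.continuousOn
    measurableSet_Ioo isCompact_Icc Ioo_subset_Icc_self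

lemma coeff_X_mul_natDegree {R : Type*} [Semiring R] (p : R[X]) :
    (X * p).coeff p.natDegree = p.nextCoeff := by
  rcases h : p.natDegree with _ | d
  · simp [nextCoeff, h]
  · simp [nextCoeff, h, coeff_X_mul]

lemma degree_sub_C_coeff_mul_lt {R : Type*} [Ring R] {p q : R[X]} {d : ℕ} (hp : p.Monic)
    (hpd : p.natDegree = d) (hq : q.degree < ↑(d + 1)) :
    (q - C (q.coeff d) * p).degree < d := by
  rw [degree_lt_iff_coeff_zero] at hq ⊢
  intro k hk
  rcases hk.eq_or_lt with rfl | hk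
  · simp [coeff_C_mul, ← hpd, hp.coeff_natDegree]
  · simp [coeff_C_mul, hq k hk, coeff_eq_zero_of_natDegree_lt (hpd ▸ hk)]

noncomputable def jacobiIntegral (a b : ℝ) (q : ℝ[X]) : ℝ :=
  ∫ x in Ioo 0 1, x ^ b * (1 - x) ^ a * q.eval x

lemma jacobiIntegral_add (ha : -1 < a) (hb : -1 < b) (p q : ℝ[X]) :
    jacobiIntegral a b (p + q) = jacobiIntegral a b p + jacobiIntegral a b q := by
  rw [jacobiIntegral, jacobiIntegral, jacobiIntegral, ← integral_add
    (integrableOn_jacobiWeight_mul_eval ha hb p) (integrableOn_jacobiWeight_mul_eval ha hb q)]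
  simp only [eval_add, mul_add]

lemma jacobiIntegral_C_mul (c : ℝ) (q : ℝ[X]) :
    jacobiIntegral a b (C c * q) = c * jacobiIntegral a b q := by
  rw [jacobiIntegral, jacobiIntegral, ← integral_const_mul]
  simp only [eval_mul, eval_C, mul_left_comm]

lemma jacobiWeight_pos {x : ℝ} (hx : x ∈ Ioo (0 : ℝ) 1) : 0 < x ^ b * (1 - x) ^ a :=
  mul_pos (rpow_pos_of_pos hx.1 b) (rpow_pos_of_pos (by linarith [hx.2]) a)

lemma jacobiIntegral_mul_self_pos (ha : -1 < a) (hb : -1 < b) {p : ℝ[X]} (hp : p ≠ 0) :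
    0 < jacobiIntegral a b (p * p) := by
  have hnonneg : 0 ≤ᵐ[volume.restrict (Ioo 0 1)]
      fun x : ℝ => x ^ b * (1 - x) ^ a * (p * p).eval x := by
    filter_upwards [ae_restrict_mem measurableSet_Ioo] with x hx
    rw [Pi.zero_apply, eval_mul]
    exact mul_nonneg (jacobiWeight_pos hx).le (mul_self_nonneg _)
  rw [jacobiIntegral, setIntegral_pos_iff_support_of_nonneg_ae hnonneg
    (integrableOn_jacobiWeight_mul_eval ha hb _)]
  have hroots : volume {x : ℝ | p.IsRoot x} = 0 := (finite_setOfPred_isRoot hp).measure_zero _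
  calc (0 : ENNReal) < volume (Ioo (0 : ℝ) 1 \ {x | p.IsRoot x}) := by
        rw [measure_sdiff_null hroots, Real.volume_Ioo]; norm_num
    _ ≤ _ := by
        refine measure_mono fun x ⟨hx, hroot⟩ => ⟨?_, hx⟩
        rw [Function.mem_support, eval_mul]
        exact mul_ne_zero (jacobiWeight_pos hx).ne' (mul_ne_zero hroot hroot)

/-- Pearson's equation `(x (1 - x) w)' = (b + 1 - (a + b + 2) x) w` for `w x = x ^ b * (1 - x) ^ a`,
integrated against `p`; the boundary terms vanish because `a + 1, b + 1 > 0`. -/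
lemma jacobiIntegral_pearson (ha : -1 < a) (hb : -1 < b) (p : ℝ[X]) :
    jacobiIntegral a b (X * (1 - X) * derivative p + (C (b + 1) - C (a + b + 2) * X) * p) = 0 := by
  set q := X * (1 - X) * derivative p + (C (b + 1) - C (a + b + 2) * X) * p
  set F : ℝ → ℝ := fun x => x ^ (b + 1) * (1 - x) ^ (a + 1) * p.eval x with hF
  have hFcont : ContinuousOn F (Icc 0 1) :=
    (((continuous_rpow_const (by linarith)).mul
      ((continuous_rpow_const (by linarith)).comp (continuous_const.sub continuous_id))).mul
      p.continuous).continuousOn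
  have hFderiv : ∀ x ∈ Ioo (0 : ℝ) 1, HasDerivAt F (x ^ b * (1 - x) ^ a * q.eval x) x := by
    intro x hx
    have hx0 : x ≠ 0 := hx.1.ne'
    have hx1 : 1 - x ≠ 0 := by linarith [hx.2]
    have hxb : HasDerivAt (fun y : ℝ => y ^ (b + 1)) ((b + 1) * x ^ b) x := by
      simpa using hasDerivAt_rpow_const (p := b + 1) (Or.inl hx0)
    have hxa : HasDerivAt (fun y : ℝ => (1 - y) ^ (a + 1)) (-1 * (a + 1) * (1 - x) ^ a) x := by
      simpa using ((hasDerivAt_id' x).const_sub 1).rpow_const (p := a + 1) (Or.inl hx1)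
    refine ((hxb.mul hxa).mul (p.hasDerivAt x)).congr_deriv ?_
    simp only [q, Pi.mul_apply, eval_add, eval_mul, eval_sub, eval_X, eval_one, eval_C]
    rw [rpow_add_one hx0, rpow_add_one hx1]
    ring
  have hFTC := intervalIntegral.integral_eq_sub_of_hasDeriv_right_of_le zero_le_one hFcont
    (fun x hx => (hFderiv x hx).hasDerivWithinAt)
    ((intervalIntegrable_iff_integrableOn_Ioo_of_le zero_le_one).2
      (integrableOn_jacobiWeight_mul_eval ha hb q))
  rw [intervalIntegral.integral_of_le zero_le_one, integral_Ioc_eq_integral_Ioo] at hFTC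
  rw [jacobiIntegral, hFTC, hF]
  simp [zero_rpow (by linarith : b + 1 ≠ 0), zero_rpow (by linarith : a + 1 ≠ 0)]

noncomputable def jacobiOp (a b : ℝ) (p : ℝ[X]) : ℝ[X] :=
  X * (1 - X) * derivative (derivative p) + (C (b + 1) - C (a + b + 2) * X) * derivative p

lemma coeff_jacobiOp (p : ℝ[X]) (k : ℕ) :
    (jacobiOp a b p).coeff k =
      (k + 1) * (k + b + 1) * p.coeff (k + 1) - k * (k + a + b + 1) * p.coeff k := by
  have hop : jacobiOp a b p = X * derivative (derivative p) - X * (X * derivative (derivative p))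
      + C (b + 1) * derivative p - C (a + b + 2) * (X * derivative p) := by
    rw [jacobiOp]; ring
  rw [hop]
  rcases k with _ | _ | k <;>
  · simp only [coeff_add, coeff_sub, coeff_C_mul, coeff_X_mul, coeff_X_mul_zero, coeff_derivative]
    push_cast
    ring

lemma degree_jacobiOp_lt {p : ℝ[X]} {n : ℕ} (hp : p.degree < n) :
    (jacobiOp a b p).degree < n := by
  rw [degree_lt_iff_coeff_zero] at hp ⊢
  intro k hk
  rw [coeff_jacobiOp, hp k hk, hp (k + 1) (by omega)]
  ring

/-- The operator is symmetric because its antisymmetric part `q (D p) - p (D q)` is the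
Pearson expression of the Wronskian `p' q - p q'`. -/
lemma jacobiIntegral_mul_jacobiOp_comm (ha : -1 < a) (hb : -1 < b) (p q : ℝ[X]) :
    jacobiIntegral a b (q * jacobiOp a b p) = jacobiIntegral a b (p * jacobiOp a b q) := by
  have hW := jacobiIntegral_pearson ha hb (derivative p * q - p * derivative q)
  have hsplit : q * jacobiOp a b p = p * jacobiOp a b q +
      (X * (1 - X) * derivative (derivative p * q - p * derivative q) +
        (C (b + 1) - C (a + b + 2) * X) * (derivative p * q - p * derivative q)) := by
    simp only [jacobiOp, derivative_sub, derivative_mul]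
    ring
  rw [hsplit, jacobiIntegral_add ha hb, hW, add_zero]

structure IsMonicJacobiOrthogonal (a b : ℝ) (P : ℕ → ℝ[X]) : Prop where
  monic : ∀ m, (P m).Monic
  natDegree_eq : ∀ m, (P m).natDegree = m
  orthogonal : ∀ m l, m ≠ l → jacobiIntegral a b (P m * P l) = 0

namespace IsMonicJacobiOrthogonal

variable {P : ℕ → ℝ[X]}

lemma jacobiIntegral_mul_eq_zero (hP : IsMonicJacobiOrthogonal a b P) (ha : -1 < a)
    (hb : -1 < b) {m : ℕ} {q : ℝ[X]} (hq : q.degree < m) :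
    jacobiIntegral a b (P m * q) = 0 := by
  suffices ∀ d ≤ m, ∀ q : ℝ[X], q.degree < d → jacobiIntegral a b (P m * q) = 0 from
    this m le_rfl q hq
  intro d
  induction d with
  | zero =>
    intro _ q hq
    obtain rfl : q = 0 := by
      ext k; simpa using (degree_lt_iff_coeff_zero q 0).1 hq k (Nat.zero_le k)
    simp [jacobiIntegral]
  | succ d ih =>
    intro hdm q hq
    have hr := degree_sub_C_coeff_mul_lt (hP.monic d) (hP.natDegree_eq d) hq
    calc jacobiIntegral a b (P m * q)
        = jacobiIntegral a b (P m * (q - C (q.coeff d) * P d)) +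
            q.coeff d * jacobiIntegral a b (P m * P d) := by
          rw [← jacobiIntegral_C_mul, ← jacobiIntegral_add ha hb]; congr 1; ring
      _ = 0 := by rw [ih (by omega) _ hr, hP.orthogonal m d (by omega), mul_zero, add_zero]

lemma jacobiIntegral_mul_eq_coeff_mul (hP : IsMonicJacobiOrthogonal a b P) (ha : -1 < a)
    (hb : -1 < b) {m : ℕ} {q : ℝ[X]} (hq : q.degree < ↑(m + 1)) :
    jacobiIntegral a b (P m * q) = q.coeff m * jacobiIntegral a b (P m * P m) := by
  have hr := degree_sub_C_coeff_mul_lt (hP.monic m) (hP.natDegree_eq m) hq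
  calc jacobiIntegral a b (P m * q)
      = jacobiIntegral a b (P m * (q - C (q.coeff m) * P m)) +
          jacobiIntegral a b (C (q.coeff m) * (P m * P m)) := by
        rw [← jacobiIntegral_add ha hb]; congr 1; ring
    _ = _ := by rw [hP.jacobiIntegral_mul_eq_zero ha hb hr, jacobiIntegral_C_mul, zero_add]

lemma jacobiOp_eq (hP : IsMonicJacobiOrthogonal a b P) (ha : -1 < a) (hb : -1 < b) (n : ℕ) :
    jacobiOp a b (P n) = C (-(n * (n + a + b + 1))) * P n := by
  set r := jacobiOp a b (P n) + C ((n : ℝ) * (n + a + b + 1)) * P n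
  have hr : r.degree < n := by
    rw [degree_lt_iff_coeff_zero]
    intro k hk
    have hPn : ∀ i, n < i → (P n).coeff i = 0 := fun i hi =>
      coeff_eq_zero_of_natDegree_lt (by rwa [hP.natDegree_eq])
    rcases hk.eq_or_lt with rfl | hk
    · simp only [r, coeff_add, coeff_jacobiOp, coeff_C_mul, hPn (n + 1) (by omega)]
      ring
    · simp only [r, coeff_add, coeff_jacobiOp, coeff_C_mul, hPn _ hk, hPn (k + 1) (by omega)]
      ring
  have hrr : jacobiIntegral a b (r * r) = 0 := by
    calc jacobiIntegral a b (r * r)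
        = jacobiIntegral a b (r * jacobiOp a b (P n)) +
            (n * (n + a + b + 1)) * jacobiIntegral a b (P n * r) := by
          rw [← jacobiIntegral_C_mul, ← jacobiIntegral_add ha hb]
          congr 1
          simp only [r]
          ring
      _ = 0 := by
          rw [jacobiIntegral_mul_jacobiOp_comm ha hb,
            hP.jacobiIntegral_mul_eq_zero ha hb (degree_jacobiOp_lt hr),
            hP.jacobiIntegral_mul_eq_zero ha hb hr, mul_zero, add_zero]
  have hr0 : r = 0 := by
    by_contra hne
    exact (jacobiIntegral_mul_self_pos ha hb hne).ne' hrr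
  rw [map_neg, neg_mul, eq_neg_iff_add_eq_zero]
  exact hr0

lemma nextCoeff_eq (hP : IsMonicJacobiOrthogonal a b P) (ha : -1 < a) (hb : -1 < b) (n : ℕ) :
    (P n).nextCoeff = -(n * (b + n)) / (a + b + 2 * n) := by
  rcases n with _ | m
  · simp [nextCoeff, hP.natDegree_eq 0]
  have hcoeff := congrArg (coeff · m) (hP.jacobiOp_eq ha hb (m + 1))
  have htop : (P (m + 1)).coeff (m + 1) = 1 := by
    simpa [hP.natDegree_eq] using (hP.monic (m + 1)).coeff_natDegree
  have hnext : (P (m + 1)).nextCoeff = (P (m + 1)).coeff m := by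
    simp [nextCoeff, hP.natDegree_eq]
  simp only [coeff_jacobiOp, coeff_C_mul, htop] at hcoeff
  have hpos : 0 < a + b + 2 * ((m + 1 : ℕ) : ℝ) := by push_cast; linarith
  rw [hnext, eq_div_iff hpos.ne']
  push_cast at hcoeff ⊢
  linarith

lemma jacobiIntegral_X_mul_sq (hP : IsMonicJacobiOrthogonal a b P) (ha : -1 < a)
    (hb : -1 < b) (j : ℕ) :
    jacobiIntegral a b (X * (P j * P j)) =
      ((P j).nextCoeff - (P (j + 1)).nextCoeff) * jacobiIntegral a b (P j * P j) := by
  have hg : (X * P j - P (j + 1)).degree < ↑(j + 1) := by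
    rw [degree_lt_iff_coeff_zero]
    intro k hk
    rcases hk.eq_or_lt with rfl | hk
    · have h1 := (hP.monic j).coeff_natDegree
      have h2 := (hP.monic (j + 1)).coeff_natDegree
      rw [hP.natDegree_eq] at h1 h2
      simp [coeff_X_mul, h1, h2]
    · obtain ⟨i, rfl⟩ : ∃ i, k = i + 1 := ⟨k - 1, by omega⟩
      simp [coeff_X_mul, coeff_eq_zero_of_natDegree_lt, hP.natDegree_eq, hk,
        show j < i by omega]
  have hgj : (X * P j - P (j + 1)).coeff j = (P j).nextCoeff - (P (j + 1)).nextCoeff := by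
    have hX := coeff_X_mul_natDegree (P j)
    rw [hP.natDegree_eq] at hX
    rw [coeff_sub, hX, nextCoeff_of_natDegree_pos (p := P (j + 1)) (by simp [hP.natDegree_eq])]
    simp [hP.natDegree_eq]
  calc jacobiIntegral a b (X * (P j * P j))
      = jacobiIntegral a b (P j * P (j + 1)) +
          jacobiIntegral a b (P j * (X * P j - P (j + 1))) := by
        rw [← jacobiIntegral_add ha hb]; congr 1; ring
    _ = _ := by
        rw [hP.orthogonal j (j + 1) (by omega), zero_add,
          hP.jacobiIntegral_mul_eq_coeff_mul ha hb hg, hgj]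

lemma sum_jacobiIntegral_X_mul_sq_div (hP : IsMonicJacobiOrthogonal a b P) (ha : -1 < a)
    (hb : -1 < b) (n : ℕ) :
    ∑ j ∈ range n, jacobiIntegral a b (X * (P j * P j)) / jacobiIntegral a b (P j * P j) =
      -(P n).nextCoeff := by
  have hterm : ∀ j, jacobiIntegral a b (X * (P j * P j)) / jacobiIntegral a b (P j * P j) =
      (P j).nextCoeff - (P (j + 1)).nextCoeff := fun j => by
    rw [hP.jacobiIntegral_X_mul_sq ha hb, mul_div_cancel_right₀ _
      (jacobiIntegral_mul_self_pos ha hb (hP.monic j).ne_zero).ne']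
  rw [sum_congr rfl fun j _ => hterm j, sum_range_sub']
  simp [nextCoeff, hP.natDegree_eq 0]

end IsMonicJacobiOrthogonal

end

theorem jue_first_moment_general (a b : ℝ) (ha : -1 < a) (hb : -1 < b) (n : ℕ)
    (P : ℕ → Polynomial ℝ)
    (hmonic : ∀ m : ℕ, (P m).Monic)
    (hdeg : ∀ m : ℕ, (P m).natDegree = m)
    (horth : ∀ m l : ℕ, m ≠ l →
      ∫ x in Set.Ioo (0 : ℝ) 1,
        x ^ b * (1 - x) ^ a * (P m).eval x * (P l).eval x = 0)
    (h : ℕ → ℝ)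
    (hh : ∀ j : ℕ, h j = ∫ x in Set.Ioo (0 : ℝ) 1,
      x ^ b * (1 - x) ^ a * ((P j).eval x) ^ 2) :
    ∫ x in Set.Ioo (0 : ℝ) 1,
        x * (x ^ b * (1 - x) ^ a * ∑ j ∈ Finset.range n, ((P j).eval x) ^ 2 / h j) =
      (n : ℝ) * (b + (n : ℝ)) / (a + b + 2 * (n : ℝ)) := by
  have hP : IsMonicJacobiOrthogonal a b P := ⟨hmonic, hdeg, fun m l hml => by
    rw [← horth m l hml, jacobiIntegral]; simp only [eval_mul, mul_assoc]⟩
  have hnorm : ∀ j, h j = jacobiIntegral a b (P j * P j) := fun j => by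
    rw [hh j, jacobiIntegral]; simp only [eval_mul, sq]
  have hintegrand :
      (fun x : ℝ => x * (x ^ b * (1 - x) ^ a * ∑ j ∈ range n, (P j).eval x ^ 2 / h j)) =
        fun x => ∑ j ∈ range n,
          (h j)⁻¹ * (x ^ b * (1 - x) ^ a * (X * (P j * P j)).eval x) := by
    funext x
    rw [mul_sum, mul_sum]
    congr 1 with j
    simp only [eval_mul, eval_X]
    ring
  calc _ = ∑ j ∈ range n,
          jacobiIntegral a b (X * (P j * P j)) / jacobiIntegral a b (P j * P j) := by
        rw [hintegrand, integral_finsetSum _ fun j _ =>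
          (integrableOn_jacobiWeight_mul_eval ha hb _).const_mul _]
        refine sum_congr rfl fun j _ => ?_
        rw [integral_const_mul, hnorm, inv_mul_eq_div]
        rfl
    _ = _ := by
        rw [hP.sum_jacobiIntegral_X_mul_sq_div ha hb, hP.nextCoeff_eq ha hb, neg_div, neg_neg]

/-- The first moment of the eigenvalue density of the `n`-dimensional Jacobi Unitary
Ensemble with parameters `a, b > -1` equals `n(b+n)/(a+b+2n)`. -/
theorem jue_first_moment (a b : ℝ) (ha : -1 < a) (hb : -1 < b) (n : ℕ) (hn : 0 < n)
    (P : ℕ → Polynomial ℝ)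
    (hmonic : ∀ m : ℕ, (P m).Monic)
    (hdeg : ∀ m : ℕ, (P m).natDegree = m)
    (horth : ∀ m l : ℕ, m ≠ l →
      ∫ x in Set.Ioo (0 : ℝ) 1,
        x ^ b * (1 - x) ^ a * (P m).eval x * (P l).eval x = 0)
    (h : ℕ → ℝ)
    (hh : ∀ j : ℕ, h j = ∫ x in Set.Ioo (0 : ℝ) 1,
      x ^ b * (1 - x) ^ a * ((P j).eval x) ^ 2) :
    ∫ x in Set.Ioo (0 : ℝ) 1,
        x * (x ^ b * (1 - x) ^ a * ∑ j ∈ Finset.range n, ((P j).eval x) ^ 2 / h j) =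
      (n : ℝ) * (b + (n : ℝ)) / (a + b + 2 * (n : ℝ)) :=
  jue_first_moment_general a b ha hb n P hmonic hdeg horth h hh
end

section
/- The incomplete beta epsilon-transform identity: for 0 < x < 1, a, b > -1 and every positive integer k, (1/2)∫_0^1 sgn(x-t)·t^b(1-t)^a dt = ∑_{j=1}^{k} d_j·x^{b+j}(1-x)^{a+1} + (a+b+k+1)·d_k·(1/2)∫_0^1 sgn(x-t)·t^{b+k}(1-t)^a dt, where d_j = Γ(a+b+j+1)·Γ(b+1)/(Γ(a+b+2)·Γ(b+1+j)). -/
open Finset MeasureTheory Real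

/-!
Write `I(c) = (1/2) ∫₀¹ sgn(x - t) t^c (1-t)^a dt`. Integrating the derivative
`(c+1) t^c (1-t)^a - (a+c+2) t^(c+1) (1-t)^a` of `t^(c+1) (1-t)^(a+1)` against `sgn(x - t)`,
the boundary values at `0` and `1` vanish and the one at `x` is counted twice, which gives
`(c+1) I(c) = x^(c+1) (1-x)^(a+1) + (a+c+2) I(c+1)`. Iterating this from `c = b`, the products
of the ratios `(a+b+j+1)/(b+j+1)` are the Gamma quotients `d_j`, by `Γ(s+1) = s Γ(s)`.
-/

lemma intervalIntegrable_rpow_mul_one_sub_rpow {a b : ℝ} (ha : -1 < a) (hb : -1 < b) :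
    IntervalIntegrable (fun t : ℝ => t ^ b * (1 - t) ^ a) volume 0 1 := by
  have hleft : IntervalIntegrable (fun t : ℝ => t ^ b * (1 - t) ^ a) volume 0 (1 / 2) :=
    (intervalIntegral.intervalIntegrable_rpow' hb).mul_continuousOn <|
      ContinuousOn.rpow_const (by fun_prop) fun t ht => .inl <| by
        rw [Set.uIcc_of_le (by norm_num)] at ht
        linarith [ht.2]
  have hright : IntervalIntegrable (fun t : ℝ => t ^ b * (1 - t) ^ a) volume (1 / 2) 1 := by
    have h : IntervalIntegrable (fun t : ℝ => (1 - t) ^ a) volume (1 / 2) 1 := by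
      convert ((intervalIntegral.intervalIntegrable_rpow' ha (a := 0) (b := 1 / 2)).comp_sub_left
        1).symm using 1 <;> norm_num
    refine h.continuousOn_mul (ContinuousOn.rpow_const (by fun_prop) fun t ht => .inl ?_)
    rw [Set.uIcc_of_le (by norm_num)] at ht
    linarith [ht.1]
  exact hleft.trans hright

lemma setIntegral_Ioo_sign_sub_mul {f : ℝ → ℝ} {u v x : ℝ} (hf : IntervalIntegrable f volume u v)
    (hux : u ≤ x) (hxv : x ≤ v) :
    ∫ t in Set.Ioo u v, Real.sign (x - t) * f t = (∫ t in u..x, f t) - ∫ t in x..v, f t := by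
  have hleft : ∀ᵐ t ∂volume, t ∈ Set.uIoc u x → Real.sign (x - t) * f t = f t := by
    filter_upwards [Measure.ae_ne volume x] with t hne ht
    rw [Set.uIoc_of_le hux] at ht
    rw [Real.sign_of_pos (sub_pos.2 (lt_of_le_of_ne ht.2 hne)), one_mul]
  have hleft' : (fun t => Real.sign (x - t) * f t) =ᵐ[volume.restrict (Set.uIoc u x)] f :=
    (ae_restrict_iff' measurableSet_uIoc).2 hleft
  have hright : Set.EqOn (fun t => -f t) (fun t => Real.sign (x - t) * f t) (Set.uIoc x v) := by
    intro t ht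
    rw [Set.uIoc_of_le hxv] at ht
    simp only [Real.sign_of_neg (sub_neg.2 ht.1), neg_one_mul]
  have hfl : IntervalIntegrable f volume u x := hf.mono_set (Set.uIcc_subset_uIcc_left (by
    rw [Set.uIcc_of_le (hux.trans hxv)]; exact ⟨hux, hxv⟩))
  have hfr : IntervalIntegrable f volume x v := hf.mono_set (Set.uIcc_subset_uIcc_right (by
    rw [Set.uIcc_of_le (hux.trans hxv)]; exact ⟨hux, hxv⟩))
  rw [← integral_Ioc_eq_integral_Ioo, ← intervalIntegral.integral_of_le (hux.trans hxv),
    ← intervalIntegral.integral_add_adjacent_intervals (hfl.congr_ae hleft'.symm)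
      (hfr.neg.congr hright),
    intervalIntegral.integral_congr_ae hleft,
    ← intervalIntegral.integral_congr_ae (ae_of_all _ fun t => @hright t),
    intervalIntegral.integral_neg, sub_eq_add_neg]

lemma hasDerivAt_rpow_mul_one_sub_rpow {a c t : ℝ} (ht0 : 0 < t) (ht1 : t < 1) :
    HasDerivAt (fun t : ℝ => t ^ (c + 1) * (1 - t) ^ (a + 1))
      ((c + 1) * (t ^ c * (1 - t) ^ a) - (a + c + 2) * (t ^ (c + 1) * (1 - t) ^ a)) t := by
  have h1t : 0 < 1 - t := sub_pos.2 ht1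
  have hl : HasDerivAt (fun t : ℝ => t ^ (c + 1)) ((c + 1) * t ^ c) t := by
    simpa using Real.hasDerivAt_rpow_const (p := c + 1) (Or.inl ht0.ne')
  have hr : HasDerivAt (fun t : ℝ => (1 - t) ^ (a + 1)) (-((a + 1) * (1 - t) ^ a)) t := by
    simpa [Function.comp_def] using
      (Real.hasDerivAt_rpow_const (p := a + 1) (Or.inl h1t.ne')).comp t
        ((hasDerivAt_id t).const_sub 1)
  refine (hl.mul hr).congr_deriv ?_
  rw [Real.rpow_add ht0, Real.rpow_add h1t, Real.rpow_one, Real.rpow_one]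
  ring

lemma integral_rpow_mul_one_sub_rpow_recurrence {a c u v : ℝ} (ha : -1 < a) (hc : -1 < c)
    (hu : 0 ≤ u) (huv : u ≤ v) (hv : v ≤ 1) :
    (c + 1) * (∫ t in u..v, t ^ c * (1 - t) ^ a)
        - (a + c + 2) * ∫ t in u..v, t ^ (c + 1) * (1 - t) ^ a
      = v ^ (c + 1) * (1 - v) ^ (a + 1) - u ^ (c + 1) * (1 - u) ^ (a + 1) := by
  have hsub : Set.uIcc u v ⊆ Set.uIcc 0 1 := Set.uIcc_subset_uIcc
    (Set.mem_uIcc_of_le hu (huv.trans hv)) (Set.mem_uIcc_of_le (hu.trans huv) hv)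
  have hic := (intervalIntegrable_rpow_mul_one_sub_rpow ha hc).mono_set hsub
  have hic1 :=
    (intervalIntegrable_rpow_mul_one_sub_rpow ha (by linarith : -1 < c + 1)).mono_set hsub
  rw [← intervalIntegral.integral_const_mul, ← intervalIntegral.integral_const_mul,
    ← intervalIntegral.integral_sub (hic.const_mul _) (hic1.const_mul _)]
  refine intervalIntegral.integral_eq_sub_of_hasDerivAt_of_le huv ?_
    (fun t ht => hasDerivAt_rpow_mul_one_sub_rpow (hu.trans_lt ht.1) (ht.2.trans_le hv))
    ((hic.const_mul _).sub (hic1.const_mul _))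
  exact (ContinuousOn.rpow_const (by fun_prop) fun _ _ => .inr (by linarith)).mul
    (ContinuousOn.rpow_const (by fun_prop) fun _ _ => .inr (by linarith))

noncomputable def signedBetaIntegral (a c x : ℝ) : ℝ :=
  (1 / 2) * ∫ t in Set.Ioo (0 : ℝ) 1, Real.sign (x - t) * t ^ c * (1 - t) ^ a

lemma signedBetaIntegral_eq_integral_sub_integral {a c x : ℝ} (ha : -1 < a) (hc : -1 < c)
    (hx0 : 0 ≤ x) (hx1 : x ≤ 1) :
    signedBetaIntegral a c x
      = (1 / 2) * ((∫ t in (0)..x, t ^ c * (1 - t) ^ a) - ∫ t in x..1, t ^ c * (1 - t) ^ a) := by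
  simp only [signedBetaIntegral, mul_assoc]
  rw [setIntegral_Ioo_sign_sub_mul (intervalIntegrable_rpow_mul_one_sub_rpow ha hc) hx0 hx1]

lemma signedBetaIntegral_recurrence {a c x : ℝ} (ha : -1 < a) (hc : -1 < c)
    (hx0 : 0 ≤ x) (hx1 : x ≤ 1) :
    (c + 1) * signedBetaIntegral a c x
      = x ^ (c + 1) * (1 - x) ^ (a + 1) + (a + c + 2) * signedBetaIntegral a (c + 1) x := by
  have hleft := integral_rpow_mul_one_sub_rpow_recurrence ha hc le_rfl hx0 hx1
  have hright := integral_rpow_mul_one_sub_rpow_recurrence ha hc hx0 hx1 le_rfl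
  rw [Real.zero_rpow (by linarith), zero_mul, sub_zero] at hleft
  rw [sub_self, Real.zero_rpow (by linarith), mul_zero, zero_sub] at hright
  rw [signedBetaIntegral_eq_integral_sub_integral ha hc hx0 hx1,
    signedBetaIntegral_eq_integral_sub_integral ha (by linarith) hx0 hx1]
  linear_combination (hleft - hright) / 2

noncomputable def epsilonCoeff (a b : ℝ) (j : ℕ) : ℝ :=
  Real.Gamma (a + b + (j : ℝ) + 1) * Real.Gamma (b + 1) /
    (Real.Gamma (a + b + 2) * Real.Gamma (b + 1 + (j : ℝ)))

lemma epsilonCoeff_one {a b : ℝ} (hab : 0 < a + b + 2) (hb : 0 < b + 1) :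
    (b + 1) * epsilonCoeff a b 1 = 1 := by
  have hΓab := (Real.Gamma_pos_of_pos hab).ne'
  have hΓb := (Real.Gamma_pos_of_pos hb).ne'
  rw [epsilonCoeff, Nat.cast_one, show a + b + 1 + 1 = a + b + 2 by ring,
    Real.Gamma_add_one hb.ne']
  field_simp

lemma epsilonCoeff_succ {a b : ℝ} {k : ℕ} (habk : a + b + k + 1 ≠ 0) (hbk : b + k + 1 ≠ 0) :
    (b + k + 1) * epsilonCoeff a b (k + 1) = (a + b + k + 1) * epsilonCoeff a b k := by
  rw [epsilonCoeff, epsilonCoeff, Nat.cast_succ,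
    show a + b + (k + 1) + 1 = (a + b + k + 1) + 1 by ring,
    show b + 1 + (k + 1) = (b + 1 + k) + 1 by ring, Real.Gamma_add_one habk,
    Real.Gamma_add_one (s := b + 1 + k) (by rwa [add_right_comm]), add_right_comm b 1]
  field_simp

theorem signedBetaIntegral_expansion {a b x : ℝ} (ha : -1 < a) (hb : -1 < b)
    (hx0 : 0 ≤ x) (hx1 : x ≤ 1) {k : ℕ} (hk : 1 ≤ k) :
    signedBetaIntegral a b x
      = (∑ j ∈ Icc 1 k, epsilonCoeff a b j * x ^ (b + j) * (1 - x) ^ (a + 1))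
        + (a + b + k + 1) * epsilonCoeff a b k * signedBetaIntegral a (b + k) x := by
  induction k, hk using Nat.le_induction with
  | base =>
    have hrec := signedBetaIntegral_recurrence ha hb hx0 hx1
    have hd := epsilonCoeff_one (a := a) (by linarith) (by linarith : 0 < b + 1)
    rw [Icc_self, sum_singleton, Nat.cast_one]
    linear_combination epsilonCoeff a b 1 * hrec - signedBetaIntegral a b x * hd
  | succ k hk ih =>
    have hk' : (1 : ℝ) ≤ k := by exact_mod_cast hk
    have hrec := signedBetaIntegral_recurrence (c := b + k) ha (by linarith) hx0 hx1
    have hd := epsilonCoeff_succ (a := a) (b := b) (k := k) (by linarith) (by linarith)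
    rw [sum_Icc_succ_top (by omega), ih, Nat.cast_succ, ← add_assoc b]
    linear_combination epsilonCoeff a b (k + 1) * hrec - signedBetaIntegral a (b + k) x * hd

/-- The incomplete beta epsilon-transform identity: for `0 < x < 1`, `a, b > -1` and
every positive integer `k`,
`(1/2)∫_0^1 sgn(x-t) t^b (1-t)^a dt
  = ∑_{j=1}^k d_j x^{b+j} (1-x)^{a+1}
    + (a+b+k+1) d_k (1/2)∫_0^1 sgn(x-t) t^{b+k} (1-t)^a dt`,
where `d_j = Γ(a+b+j+1)Γ(b+1)/(Γ(a+b+2)Γ(b+1+j))`. -/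
theorem jacobi_epsilon_transform (a b : ℝ) (ha : -1 < a) (hb : -1 < b) (k : ℕ)
    (hk : 0 < k) (x : ℝ) (hx0 : 0 < x) (hx1 : x < 1) :
    (1 / 2) * ∫ t in Set.Ioo (0 : ℝ) 1,
        Real.sign (x - t) * t ^ b * (1 - t) ^ a =
      (∑ j ∈ Finset.Icc 1 k,
        (Real.Gamma (a + b + (j : ℝ) + 1) * Real.Gamma (b + 1) /
            (Real.Gamma (a + b + 2) * Real.Gamma (b + 1 + (j : ℝ)))) *
          x ^ (b + (j : ℝ)) * (1 - x) ^ (a + 1)) +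
      (a + b + (k : ℝ) + 1) *
        (Real.Gamma (a + b + (k : ℝ) + 1) * Real.Gamma (b + 1) /
          (Real.Gamma (a + b + 2) * Real.Gamma (b + 1 + (k : ℝ)))) *
        ((1 / 2) * ∫ t in Set.Ioo (0 : ℝ) 1,
          Real.sign (x - t) * t ^ (b + (k : ℝ)) * (1 - t) ^ a) :=
  signedBetaIntegral_expansion ha hb hx0.le hx1.le hk
end
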